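/- arXiv:math/9911262 — 8 statements merged into one kernel-verified Lean document; each statement's English description precedes it below -/
import Mathlib

section
/- Let (Σ, σ) be an ME coupling of countable groups Γ (acting on the left) and Λ (acting on the right), let X ⊆ Σ be a strict fundamental domain for the Λ-action and Y ⊆ Σ a strict fundamental domain for the Γ-action, with induced Γ-action γ·x on (X, σ|_X) and induced Λ-action y·λ on (Y, σ|_Y). Then the induced Γ-action on (X, σ|_X) is ergodic if and only if the induced Λ-action on (Y, σ|_Y) is ergodic. (An action of a countable group on a measure space is ergodic if every measurable subset that is almost everywhere invariant under every group element is either null or conull.) -/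
open MeasureTheory Filter Topology

/-- `X` is a measurable fundamental domain of finite measure for the action of `G` on `Ω`
given by the family of maps `T g : Ω → Ω`: the translates of `X` cover `Ω` up to a null set
and pairwise intersect in null sets. -/
def IsFundDom {G Ω : Type} [Group G] [MeasurableSpace Ω]
    (T : G → Ω → Ω) (m : Measure Ω) (X : Set Ω) : Prop :=
  MeasurableSet X ∧ (∀ᵐ ω ∂m, ∃ g : G, T g ω ∈ X) ∧
    (∀ g : G, g ≠ 1 → m (X ∩ T g ⁻¹' X) = 0) ∧ m X ≠ ⊤

/-- `(Ω, m)` together with the left action `L` of `Γ` and the right action `R` of `Λ`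
is a Measure Equivalence coupling of `Γ` with `Λ`: the measure is σ-finite, the two
measure-preserving actions commute, are essentially free, and each admits a measurable
fundamental domain of finite measure. -/
structure IsMECoupling {Γ Λ Ω : Type} [Group Γ] [Group Λ] [MeasurableSpace Ω]
    (m : Measure Ω) (L : Γ → Ω → Ω) (R : Λ → Ω → Ω) : Prop where
  sigmaFinite : SigmaFinite m
  L_one : ∀ ω, L 1 ω = ω
  L_mul : ∀ γ₁ γ₂ ω, L (γ₁ * γ₂) ω = L γ₁ (L γ₂ ω)
  R_one : ∀ ω, R 1 ω = ω
  R_mul : ∀ l₁ l₂ ω, R (l₁ * l₂) ω = R l₂ (R l₁ ω)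
  actions_comm : ∀ γ l ω, L γ (R l ω) = R l (L γ ω)
  L_mp : ∀ γ, MeasurePreserving (L γ) m m
  R_mp : ∀ l, MeasurePreserving (R l) m m
  L_essFree : ∀ γ : Γ, γ ≠ 1 → m {ω | L γ ω = ω} = 0
  R_essFree : ∀ l : Λ, l ≠ 1 → m {ω | R l ω = ω} = 0
  fund_L : ∃ Y : Set Ω, IsFundDom L m Y
  fund_R : ∃ X : Set Ω, IsFundDom R m X

/-- The action of `G` on the measure space given by the maps `T g` (viewed on the measure `μ`)
is ergodic: every measurable set which is almost everywhere invariant under every group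
element is null or conull. -/
def AEErgodicOn {G S : Type} [Group G] [MeasurableSpace S]
    (T : G → S → S) (μ : Measure S) : Prop :=
  ∀ A : Set S, MeasurableSet A →
    (∀ g : G, μ (symmDiff A (T g ⁻¹' A)) = 0) → μ A = 0 ∨ μ Aᶜ = 0

/-- Joint ergodicity of two families of maps: every measurable set a.e. invariant under
all of them is null or conull. -/
def JointErg {G H Ω : Type} [MeasurableSpace Ω]
    (m : Measure Ω) (L : G → Ω → Ω) (R : H → Ω → Ω) : Prop :=
  ∀ B : Set Ω, MeasurableSet B → (∀ g : G, m (symmDiff B (L g ⁻¹' B)) = 0) →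
    (∀ h : H, m (symmDiff B (R h ⁻¹' B)) = 0) → m B = 0 ∨ m Bᶜ = 0

lemma aux_erg {G H Ω : Type} [Group G] [Countable H] [MeasurableSpace Ω]
    (m : Measure Ω) (L : G → Ω → Ω) (R : H → Ω → Ω)
    (comm : ∀ g h ω, L g (R h ω) = R h (L g ω))
    (Lq : ∀ g, Measure.QuasiMeasurePreserving (L g) m m)
    (Rq : ∀ h, Measure.QuasiMeasurePreserving (R h) m m)
    (hcomp : ∀ h₁ h₂ : H, ∃ h₃, ∀ s, R h₂ (R h₁ s) = R h₃ s)
    (hdiv : ∀ h₁ h₂ : H, ∃ h₃, ∀ s, R h₃ (R h₁ s) = R h₂ s)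
    (hid : ∃ e : H, ∀ s, R e s = s)
    (X : Set Ω) (hXm : MeasurableSet X)
    (hX : ∀ s : Ω, ∃! x, x ∈ X ∧ ∃ h : H, R h s = x)
    (α : G → Ω → H) (hα : ∀ g : G, ∀ x ∈ X, R (α g x) (L g x) ∈ X) :
    AEErgodicOn (fun g x => R (α g x) (L g x)) (m.restrict X) ↔ JointErg m L R := by
  obtain ⟨e, he⟩ := hid
  have hX' : ∀ s : Ω, ∃ x, (x ∈ X ∧ ∃ h : H, R h s = x) ∧
      ∀ y, (y ∈ X ∧ ∃ h : H, R h s = y) → y = x := hX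
  choose P h1 hPu using hX'
  have hPX : ∀ s, P s ∈ X := fun s => (h1 s).1
  choose c hc using fun s => (h1 s).2
  -- The representative map is invariant on orbits
  have Pinv : ∀ (h : H) (s : Ω), P (R h s) = P s := by
    intro h s
    obtain ⟨h₃, h3⟩ := hdiv h (c s)
    exact (hPu (R h s) (P s) ⟨hPX s, ⟨h₃, by rw [h3, hc]⟩⟩).symm
  have Pfix : ∀ x ∈ X, P x = x := fun x hx => (hPu x x ⟨hx, ⟨e, he x⟩⟩).symm
  -- induced action = P ∘ L
  have PT : ∀ (g : G) (s : Ω), P (L g s) = R (α g (P s)) (L g (P s)) := by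
    intro g s
    obtain ⟨h₃, h3⟩ := hcomp (c s) (α g (P s))
    have rep : R h₃ (L g s) = R (α g (P s)) (L g (P s)) := by
      rw [← h3]
      congr 1
      rw [← comm, hc]
    exact (hPu (L g s) _ ⟨hα g (P s) (hPX s), ⟨h₃, rep⟩⟩).symm
  have key3 : ∀ B : Set Ω, B ⊆ X → P ⁻¹' B = ⋃ h, R h ⁻¹' B := by
    intro B hB
    ext s
    simp only [Set.mem_preimage, Set.mem_iUnion]
    constructor
    · intro hs; exact ⟨c s, by rw [hc s]; exact hs⟩
    · rintro ⟨h, hh⟩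
      rwa [hPu s (R h s) ⟨hB hh, h, rfl⟩] at hh
  have key4 : ∀ B : Set Ω, B ⊆ X → m B = 0 → m (P ⁻¹' B) = 0 := by
    intro B hBX hB0
    rw [key3 B hBX]
    exact measure_iUnion_null fun h => (Rq h).preimage_null hB0
  constructor
  · -- ergodicity on X implies joint ergodicity
    intro erg B hB hg hh
    set A : Set Ω := B ∩ X with hAdef
    have hAm : MeasurableSet A := hB.inter hXm
    have hinv : ∀ g : G,
        (m.restrict X) (symmDiff A ((fun x => R (α g x) (L g x)) ⁻¹' A)) = 0 := by
      intro g
      rw [Measure.restrict_apply' hXm]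
      have hN0 : m (⋃ h : H, symmDiff B ((fun s => R h (L g s)) ⁻¹' B)) = 0 := by
        refine measure_iUnion_null fun h => ?_
        have tri : symmDiff B ((fun s => R h (L g s)) ⁻¹' B) ⊆
            symmDiff B (L g ⁻¹' B) ∪ symmDiff (L g ⁻¹' B) (L g ⁻¹' (R h ⁻¹' B)) :=
          symmDiff_triangle B (L g ⁻¹' B) _
        refine measure_mono_null tri (measure_union_null (hg g) ?_)
        rw [← Set.preimage_symmDiff B (R h ⁻¹' B)]
        exact (Lq g).preimage_null (hh h)
      refine measure_mono_null ?_ hN0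
      rintro x ⟨hxs, hxX⟩
      have hTX : R (α g x) (L g x) ∈ X := hα g x hxX
      rw [Set.mem_iUnion]
      refine ⟨α g x, ?_⟩
      rw [Set.mem_symmDiff] at hxs ⊢
      simp only [Set.mem_preimage] at hxs ⊢
      simp only [hAdef, Set.mem_inter_iff, hxX, hTX, and_true] at hxs
      exact hxs
    have prom : ∀ C : Set Ω, (∀ h : H, m (symmDiff C (R h ⁻¹' C)) = 0) →
        m (C ∩ X) = 0 → m C = 0 := by
      intro C hCinv hC0
      have cover : C ⊆ ⋃ h : H, C ∩ R h ⁻¹' X := by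
        intro s hs
        exact Set.mem_iUnion.2 ⟨c s, hs, by rw [Set.mem_preimage, hc s]; exact hPX s⟩
      refine measure_mono_null cover (measure_iUnion_null fun h => ?_)
      have sub : C ∩ R h ⁻¹' X ⊆ R h ⁻¹' (C ∩ X) ∪ symmDiff C (R h ⁻¹' C) := by
        rintro s ⟨hsC, hsX⟩
        by_cases hsC' : R h s ∈ C
        · exact Or.inl ⟨hsC', hsX⟩
        · exact Or.inr (Set.mem_symmDiff.2 (Or.inl ⟨hsC, hsC'⟩))
      exact measure_mono_null sub
        (measure_union_null ((Rq h).preimage_null hC0) (hCinv h))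
    rcases erg A hAm hinv with h0 | h1
    · left
      refine prom B hh ?_
      rw [Measure.restrict_apply' hXm] at h0
      have : B ∩ X = A ∩ X := by rw [hAdef, Set.inter_assoc, Set.inter_self]
      rw [this]; exact h0
    · right
      refine prom Bᶜ (fun h => ?_) ?_
      · rw [Set.preimage_compl, compl_symmDiff_compl]; exact hh h
      · rw [Measure.restrict_apply' hXm] at h1
        have : Bᶜ ∩ X = Aᶜ ∩ X := by
          ext x
          simp only [hAdef, Set.mem_inter_iff, Set.mem_compl_iff, Set.mem_inter_iff]
          tauto
        rw [this]; exact h1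
  · -- joint ergodicity implies ergodicity on X
    intro J A hAm hinv
    set A' : Set Ω := A ∩ X with hA'def
    have hA'X : A' ⊆ X := Set.inter_subset_right
    have hA'm : MeasurableSet A' := hAm.inter hXm
    set At : Set Ω := ⋃ h : H, R h ⁻¹' A' with hAtdef
    have hAtm : MeasurableSet At :=
      MeasurableSet.iUnion fun h => (Rq h).measurable hA'm
    have hAtP : At = P ⁻¹' A' := (key3 A' hA'X).symm
    have Rinv : ∀ h : H, m (symmDiff At (R h ⁻¹' At)) = 0 := by
      intro h
      have : R h ⁻¹' At = At := by
        rw [hAtP]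
        ext s
        simp only [Set.mem_preimage, Pinv]
      rw [this, symmDiff_self]
      exact measure_empty
    have Linv : ∀ g : G, m (symmDiff At (L g ⁻¹' At)) = 0 := by
      intro g
      have heq : symmDiff At (L g ⁻¹' At) =
          P ⁻¹' ((symmDiff A' ((fun x => R (α g x) (L g x)) ⁻¹' A')) ∩ X) := by
        rw [hAtP]
        ext s
        simp only [Set.mem_symmDiff, Set.mem_preimage, Set.mem_inter_iff, PT g s,
          hPX s, and_true]
      rw [heq]
      refine key4 _ Set.inter_subset_right ?_
      have := hinv g
      rw [Measure.restrict_apply' hXm] at this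
      refine measure_mono_null ?_ this
      rintro x ⟨hxs, hxX⟩
      have hTX : R (α g x) (L g x) ∈ X := hα g x hxX
      refine ⟨?_, hxX⟩
      rw [Set.mem_symmDiff] at hxs ⊢
      simp only [Set.mem_preimage, hA'def, Set.mem_inter_iff, hxX, hTX, and_true] at hxs ⊢
      exact hxs
    rcases J At hAtm Linv Rinv with h0 | h1
    · left
      rw [Measure.restrict_apply' hXm]
      refine measure_mono_null ?_ h0
      intro x hx
      exact Set.mem_iUnion.2 ⟨e, by rw [Set.mem_preimage, he x]; exact hx⟩
    · right
      rw [Measure.restrict_apply' hXm]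
      refine measure_mono_null ?_ h1
      rintro x ⟨hxA, hxX⟩
      intro hxAt
      obtain ⟨h, hh⟩ := Set.mem_iUnion.1 hxAt
      rw [Set.mem_preimage] at hh
      have : R h x = x := by
        rw [hPu x (R h x) ⟨hA'X hh, h, rfl⟩, Pfix x hxX]
      rw [this] at hh
      exact hxA hh.1

/-- Let `(Σ, σ)` be an ME coupling of `Γ` with `Λ`, `X` a strict fundamental
domain for the `Λ`-action and `Y` a strict fundamental domain for the `Γ`-action.  Then the
induced `Γ`-action `γ·x = (γx)·α(γ,x)⁻¹` on `(X, σ|_X)` is ergodic if and only if the induced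
`Λ`-action `y·λ = β(y,λ)⁻¹·(yλ)` on `(Y, σ|_Y)` is ergodic. -/
theorem ergodic_iff_ergodic {Γ Λ Ω : Type} [Group Γ] [Countable Γ] [Group Λ] [Countable Λ]
    [MeasurableSpace Ω] (m : Measure Ω) (L : Γ → Ω → Ω) (R : Λ → Ω → Ω)
    (h : IsMECoupling m L R)
    (X Y : Set Ω) (hXm : MeasurableSet X) (hYm : MeasurableSet Y)
    (hX : ∀ s : Ω, ∃! x, x ∈ X ∧ ∃ lam : Λ, R lam s = x)
    (hY : ∀ s : Ω, ∃! y, y ∈ Y ∧ ∃ γ : Γ, L γ s = y)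
    (α : Γ → Ω → Λ) (hα : ∀ γ : Γ, ∀ x ∈ X, R (α γ x)⁻¹ (L γ x) ∈ X)
    (β : Ω → Λ → Γ) (hβ : ∀ y ∈ Y, ∀ lam : Λ, L (β y lam)⁻¹ (R lam y) ∈ Y) :
    AEErgodicOn (fun (γ : Γ) (x : Ω) => R (α γ x)⁻¹ (L γ x)) (m.restrict X) ↔
      AEErgodicOn (fun (lam : Λ) (y : Ω) => L (β y lam)⁻¹ (R lam y)) (m.restrict Y) := by
  have i1 := aux_erg m L R h.actions_comm
    (fun g => (h.L_mp g).quasiMeasurePreserving) (fun l => (h.R_mp l).quasiMeasurePreserving)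
    (fun h1 h2 => ⟨h1 * h2, fun s => (h.R_mul h1 h2 s).symm⟩)
    (fun h1 h2 => ⟨h1⁻¹ * h2, fun s => by
      rw [← h.R_mul]; congr 1; group⟩)
    ⟨1, h.R_one⟩ X hXm hX (fun g x => (α g x)⁻¹) (fun g x hx => hα g x hx)
  have i2 := aux_erg m R L (fun l g ω => (h.actions_comm g l ω).symm)
    (fun l => (h.R_mp l).quasiMeasurePreserving) (fun g => (h.L_mp g).quasiMeasurePreserving)
    (fun g1 g2 => ⟨g2 * g1, fun s => (h.L_mul g2 g1 s).symm⟩)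
    (fun g1 g2 => ⟨g2 * g1⁻¹, fun s => by
      rw [← h.L_mul]; congr 1; group⟩)
    ⟨1, h.L_one⟩ Y hYm hY (fun lam y => (β y lam)⁻¹) (fun lam y hy => hβ y hy lam)
  have jswap : JointErg m L R ↔ JointErg m R L :=
    ⟨fun J B hB h1 h2 => J B hB h2 h1, fun J B hB h1 h2 => J B hB h2 h1⟩
  exact i1.trans (jswap.trans i2.symm)
end

section
/- Let (Σ, σ) be an ME coupling of countable groups Γ with Λ, and (Σ', σ') an ME coupling of Λ with Δ. Consider the commuting measure-preserving actions on (Σ × Σ', σ × σ') given by γ : (x, y) ↦ (γx, y), δ : (x, y) ↦ (x, yδ), and λ : (x, y) ↦ (xλ, λ⁻¹y). Let Y ⊆ Σ be a strict fundamental domain for the left Γ-action on Σ, with induced right Λ-action y·λ, and let Z ⊆ Σ' be a strict fundamental domain for the right Δ-action on Σ', with induced left Λ-action λ·z. Then the combined Γ × Λ × Δ action on (Σ × Σ', σ × σ') is ergodic (every measurable subset invariant under all three actions is null or conull) if and only if the diagonal Λ-action λ : (y, z) ↦ (y·λ, λ⁻¹·z) on (Y × Z, σ|_Y × σ'|_Z)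 is ergodic. -/
open MeasureTheory Filter Topology

/-!
`Y ×ˢ Z` is a strict fundamental domain for the action of `Γ × Δᵐᵒᵖ` on `S × S'`, and the
diagonal action on it is induced by `λ`: apply `λ`, then the element of `Γ × Δᵐᵒᵖ` moving the
image back into `Y ×ˢ Z`. As `Γ × Δ` is countable, a `Γ × Δ`-invariant set is null as soon as
its trace on `Y ×ˢ Z` is, and every measurable subset of `Y ×ˢ Z` is the trace of its
saturation. Under this correspondence `λ`-invariance becomes invariance under the induced
action, so invariant null-or-conull sets correspond on both sides.
-/

open Set Function
open MeasureTheory.Measure (QuasiMeasurePreserving)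

def IsStrictFundamentalDomain {G X : Type*} (F : G → X → X) (W : Set X) : Prop :=
  ∀ x, ∃! w, w ∈ W ∧ ∃ g, F g x = w

namespace IsStrictFundamentalDomain

variable {G H X Y : Type*} {F : G → X → X} {W : Set X}

theorem exists_mem (hW : IsStrictFundamentalDomain F W) (x : X) : ∃ g, F g x ∈ W :=
  let ⟨_, ⟨hw, g, hg⟩, _⟩ := hW x
  ⟨g, hg ▸ hw⟩

theorem eq_of_mem (hW : IsStrictFundamentalDomain F W) {x : X} {g g' : G}
    (hg : F g x ∈ W) (hg' : F g' x ∈ W) : F g x = F g' x :=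
  (hW x).unique ⟨hg, g, rfl⟩ ⟨hg', g', rfl⟩

theorem prod {F' : H → Y → Y} {V : Set Y} (hW : IsStrictFundamentalDomain F W)
    (hV : IsStrictFundamentalDomain F' V) :
    IsStrictFundamentalDomain (fun (g : G × H) (p : X × Y) => (F g.1 p.1, F' g.2 p.2))
      (W ×ˢ V) := by
  intro p
  obtain ⟨g, hg⟩ := hW.exists_mem p.1
  obtain ⟨g', hg'⟩ := hV.exists_mem p.2
  refine ⟨_, ⟨⟨hg, hg'⟩, (g, g'), rfl⟩, ?_⟩
  rintro _ ⟨⟨hk, hk'⟩, k, rfl⟩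
  exact Prod.ext (hW.eq_of_mem hk hg) (hV.eq_of_mem hk' hg')

theorem comp_surjective (hW : IsStrictFundamentalDomain F W) {e : H → G} (he : Surjective e) :
    IsStrictFundamentalDomain (fun h => F (e h)) W := fun x => by
  simpa only [he.exists] using hW x

end IsStrictFundamentalDomain

section

variable {G X : Type*} [MeasurableSpace X] {μ : Measure X} {W : Set X}

theorem measure_symmDiff_preimage_comp_eq_zero {f k : X → X} {A : Set X}
    (hk : QuasiMeasurePreserving k μ μ)
    (hf : μ (symmDiff A (f ⁻¹' A)) = 0) (hkA : μ (symmDiff A (k ⁻¹' A)) = 0) :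
    μ (symmDiff A ((f ∘ k) ⁻¹' A)) = 0 := by
  rw [measure_symmDiff_eq_zero_iff] at *
  exact hkA.trans (hk.preimage_ae_eq hf)

theorem measure_eq_zero_of_invariant_of_measure_inter_eq_zero [SMul G X] [Countable G]
    (hcover : ∀ x, ∃ g : G, g • x ∈ W) (hG : ∀ g : G, QuasiMeasurePreserving (g • ·) μ μ)
    {D : Set X} (hD : ∀ g : G, μ (symmDiff D ((g • ·) ⁻¹' D)) = 0) (hDW : μ (D ∩ W) = 0) :
    μ D = 0 := by
  have hDinv : ∀ᵐ x ∂μ, ∀ g : G, (x ∈ D ↔ g • x ∈ D) :=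
    ae_all_iff.2 fun g => eventuallyEq_set.1 (measure_symmDiff_eq_zero_iff.1 (hD g))
  have hDW' : ∀ᵐ x ∂μ, ∀ g : G, g • x ∉ D ∩ W :=
    ae_all_iff.2 fun g => (hG g).ae (measure_eq_zero_iff_ae_notMem.1 hDW)
  refine measure_eq_zero_iff_ae_notMem.2 ?_
  filter_upwards [hDinv, hDW'] with x hx hxW hxD
  obtain ⟨g, hg⟩ := hcover x
  exact hxW g ⟨(hx g).1 hxD, hg⟩

theorem IsStrictFundamentalDomain.exists_invariant_inter_eq [Group G] [Countable G]
    [MulAction G X] (hW : IsStrictFundamentalDomain (fun (g : G) (x : X) => g • x) W)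
    (hWm : MeasurableSet W) (hG : ∀ g : G, Measurable (g • · : X → X)) {B : Set X}
    (hBm : MeasurableSet B) :
    ∃ A, MeasurableSet A ∧ (∀ g : G, (g • ·) ⁻¹' A = A) ∧ A ∩ W = B ∩ W := by
  refine ⟨⋃ g : G, (g • ·) ⁻¹' (B ∩ W), .iUnion fun g => hG g (hBm.inter hWm),
    fun g => ?_, ?_⟩
  · ext x
    simp only [mem_preimage, mem_iUnion, smul_smul]
    exact ⟨fun ⟨k, hk⟩ => ⟨k * g, hk⟩,
      fun ⟨k, hk⟩ => ⟨k * g⁻¹, by rwa [inv_mul_cancel_right]⟩⟩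
  · ext x
    simp only [mem_inter_iff, mem_preimage, mem_iUnion]
    refine ⟨fun ⟨⟨g, hgB, hgW⟩, hx⟩ => ⟨?_, hx⟩,
      fun ⟨hB, hx⟩ => ⟨⟨1, by rwa [one_smul], ?_⟩, hx⟩⟩
    · have := hW.eq_of_mem hgW (g' := 1) (by rwa [one_smul])
      rwa [this, one_smul] at hgB
    · rwa [one_smul]

end

section

variable {G : Type*} {Λ X : Type} [MeasurableSpace X] {μ : Measure X} {W : Set X}

theorem aeErgodicOn_restrict_of_joint_ergodic [Group G] [Countable G] [MulAction G X]
    [Group Λ] {T T' : Λ → X → X}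
    (hW : IsStrictFundamentalDomain (fun (g : G) (x : X) => g • x) W) (hWm : MeasurableSet W)
    (hG : ∀ g : G, QuasiMeasurePreserving (g • ·) μ μ)
    (hcomm : ∀ (l : Λ) (g : G) x, T l (g • x) = g • T l x)
    (hT' : ∀ l, ∀ x ∈ W, T' l x ∈ W ∧ ∃ g : G, T' l x = g • T l x)
    (H : ∀ A, MeasurableSet A → (∀ g : G, μ (symmDiff A ((g • ·) ⁻¹' A)) = 0) →
      (∀ l, μ (symmDiff A (T l ⁻¹' A)) = 0) → μ A = 0 ∨ μ Aᶜ = 0) :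
    AEErgodicOn T' (μ.restrict W) := by
  intro B hBm hB
  obtain ⟨A, hAm, hAG, hAW⟩ :=
    hW.exists_invariant_inter_eq hWm (fun g => (hG g).measurable) hBm
  have hAW' : ∀ x ∈ W, x ∈ A ↔ x ∈ B := fun x hx => by
    simpa only [mem_inter_iff, hx, and_true] using Set.ext_iff.1 hAW x
  have hAT : ∀ l, ∀ x ∈ W, T l x ∈ A ↔ T' l x ∈ B := fun l x hx => by
    obtain ⟨hxW, g, hg⟩ := hT' l x hx
    rw [← hAW' _ hxW, hg, ← mem_preimage (f := (g • ·)), hAG]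
  have hAT_inv : ∀ l, μ (symmDiff A (T l ⁻¹' A)) = 0 := fun l => by
    refine measure_eq_zero_of_invariant_of_measure_inter_eq_zero hW.exists_mem hG
      (fun g => ?_) ?_
    · have hTA : (g • ·) ⁻¹' (T l ⁻¹' A) = T l ⁻¹' A := by
        ext x
        simp only [mem_preimage, hcomm]
        exact Set.ext_iff.1 (hAG g) (T l x)
      rw [preimage_symmDiff, hAG, hTA, symmDiff_self, bot_eq_empty, measure_empty]
    · have hDW : symmDiff A (T l ⁻¹' A) ∩ W = symmDiff B (T' l ⁻¹' B) ∩ W := by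
        ext x
        simp only [mem_inter_iff, mem_symmDiff, mem_preimage]
        exact and_congr_left fun hx => by rw [hAW' x hx, hAT l x hx]
      rw [hDW, ← Measure.restrict_apply' hWm]
      exact hB l
  have hAG_inv : ∀ g : G, μ (symmDiff A ((g • ·) ⁻¹' A)) = 0 := fun g => by
    rw [hAG, symmDiff_self, bot_eq_empty, measure_empty]
  rw [Measure.restrict_apply' hWm, Measure.restrict_apply' hWm]
  refine (H A hAm hAG_inv hAT_inv).imp (fun h0 => ?_) (fun h0 => ?_)
  · rw [← hAW]
    exact measure_mono_null inter_subset_left h0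
  · exact measure_mono_null (fun x hx (hxA : x ∈ A) => hx.1 ((hAW' x hx.2).1 hxA)) h0

theorem joint_ergodic_of_aeErgodicOn_restrict [SMul G X] [Countable G] [Group Λ]
    {T T' : Λ → X → X} (hcover : ∀ x, ∃ g : G, g • x ∈ W) (hWm : MeasurableSet W)
    (hG : ∀ g : G, QuasiMeasurePreserving (g • ·) μ μ)
    (hT : ∀ l, QuasiMeasurePreserving (T l) μ μ)
    (hT' : ∀ l, ∀ x ∈ W, ∃ g : G, T' l x = g • T l x) (H : AEErgodicOn T' (μ.restrict W)) :
    ∀ A, MeasurableSet A → (∀ g : G, μ (symmDiff A ((g • ·) ⁻¹' A)) = 0) →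
      (∀ l, μ (symmDiff A (T l ⁻¹' A)) = 0) → μ A = 0 ∨ μ Aᶜ = 0 := by
  intro A hAm hAG hAT
  have hAT' : ∀ l, μ.restrict W (symmDiff A (T' l ⁻¹' A)) = 0 := fun l => by
    have hAG' : ∀ᵐ x ∂μ, ∀ g : G, (x ∈ A ↔ g • x ∈ A) :=
      ae_all_iff.2 fun g => eventuallyEq_set.1 (measure_symmDiff_eq_zero_iff.1 (hAG g))
    have hAT'' : ∀ᵐ x ∂μ, (x ∈ A ↔ T l x ∈ A) :=
      eventuallyEq_set.1 (measure_symmDiff_eq_zero_iff.1 (hAT l))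
    rw [measure_symmDiff_eq_zero_iff, eventuallyEq_set, ae_restrict_iff' hWm]
    filter_upwards [hAT'', (hT l).ae hAG'] with x hx hTx hxW
    obtain ⟨g, hg⟩ := hT' l x hxW
    rw [mem_preimage, hg, hx]
    exact hTx g
  refine (H A hAm hAT').imp (fun h0 => ?_) (fun h0 => ?_) <;>
    rw [Measure.restrict_apply' hWm] at h0
  · exact measure_eq_zero_of_invariant_of_measure_inter_eq_zero hcover hG hAG h0
  · refine measure_eq_zero_of_invariant_of_measure_inter_eq_zero hcover hG (fun g => ?_) h0
    rw [preimage_compl, compl_symmDiff_compl]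
    exact hAG g

theorem joint_ergodic_iff_aeErgodicOn_restrict [Group G] [Countable G] [MulAction G X]
    [Group Λ] {T T' : Λ → X → X}
    (hW : IsStrictFundamentalDomain (fun (g : G) (x : X) => g • x) W) (hWm : MeasurableSet W)
    (hG : ∀ g : G, QuasiMeasurePreserving (g • ·) μ μ)
    (hT : ∀ l, QuasiMeasurePreserving (T l) μ μ)
    (hcomm : ∀ (l : Λ) (g : G) x, T l (g • x) = g • T l x)
    (hT' : ∀ l, ∀ x ∈ W, T' l x ∈ W ∧ ∃ g : G, T' l x = g • T l x) :
    (∀ A, MeasurableSet A → (∀ g : G, μ (symmDiff A ((g • ·) ⁻¹' A)) = 0) →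
      (∀ l, μ (symmDiff A (T l ⁻¹' A)) = 0) → μ A = 0 ∨ μ Aᶜ = 0) ↔
      AEErgodicOn T' (μ.restrict W) :=
  ⟨aeErgodicOn_restrict_of_joint_ergodic hW hWm hG hcomm hT',
    joint_ergodic_of_aeErgodicOn_restrict hW.exists_mem hWm hG hT
      fun l x hx => (hT' l x hx).2⟩

end

instance MulOpposite.countable {α : Type*} [Countable α] : Countable αᵐᵒᵖ :=
  Countable.of_equiv α MulOpposite.opEquiv

namespace IsMECoupling

variable {Γ Λ Δ S S' : Type} [Group Γ] [Group Λ] [Group Δ] [MeasurableSpace S]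
  [MeasurableSpace S'] {σ : Measure S} {σ' : Measure S'} {LΓ : Γ → S → S} {RΛ : Λ → S → S}
  {LΛ : Λ → S' → S'} {RΔ : Δ → S' → S'}

abbrev prodMulAction (h : IsMECoupling σ LΓ RΛ) (h' : IsMECoupling σ' LΛ RΔ) :
    MulAction (Γ × Δᵐᵒᵖ) (S × S') where
  smul g p := (LΓ g.1 p.1, RΔ g.2.unop p.2)
  one_smul p := Prod.ext (h.L_one p.1) (h'.R_one p.2)
  mul_smul a b p := Prod.ext (h.L_mul a.1 b.1 p.1) (h'.R_mul b.2.unop a.2.unop p.2)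

theorem prod_invariant_iff [SFinite σ] [SFinite σ'] (h : IsMECoupling σ LΓ RΛ)
    (h' : IsMECoupling σ' LΛ RΔ) (A : Set (S × S')) :
    (∀ g : Γ × Δᵐᵒᵖ, σ.prod σ'
      (symmDiff A ((fun p : S × S' => (LΓ g.1 p.1, RΔ g.2.unop p.2)) ⁻¹' A)) = 0) ↔
      (∀ γ, σ.prod σ' (symmDiff A ((fun p : S × S' => (LΓ γ p.1, p.2)) ⁻¹' A)) = 0) ∧
      (∀ δ, σ.prod σ' (symmDiff A ((fun p : S × S' => (p.1, RΔ δ p.2)) ⁻¹' A)) = 0) := by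
  refine ⟨fun H => ⟨fun γ => ?_, fun δ => ?_⟩, fun ⟨hΓ, hΔ⟩ g => ?_⟩
  · simpa only [MulOpposite.unop_one, h'.R_one] using H (γ, 1)
  · simpa only [MulOpposite.unop_op, h.L_one] using H (1, .op δ)
  · exact measure_symmDiff_preimage_comp_eq_zero
      ((MeasurePreserving.id σ).prod (h'.R_mp g.2.unop)).quasiMeasurePreserving (hΓ g.1)
      (hΔ g.2.unop)

end IsMECoupling

theorem product_ergodic_iff_diagonal_ergodic_general
    {Γ Λ Δ : Type} [Group Γ] [Countable Γ] [Group Λ] [Group Δ] [Countable Δ]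
    {S : Type} [MeasurableSpace S] (σ : Measure S) [SigmaFinite σ]
    (LΓ : Γ → S → S) (RΛ : Λ → S → S) (h : IsMECoupling σ LΓ RΛ)
    {S' : Type} [MeasurableSpace S'] (σ' : Measure S') [SigmaFinite σ']
    (LΛ : Λ → S' → S') (RΔ : Δ → S' → S') (h' : IsMECoupling σ' LΛ RΔ)
    (Y : Set S) (hYm : MeasurableSet Y)
    (hY : ∀ s : S, ∃! y, y ∈ Y ∧ ∃ γ : Γ, LΓ γ s = y)
    (β : S → Λ → Γ) (hβ : ∀ y ∈ Y, ∀ lam : Λ, LΓ (β y lam)⁻¹ (RΛ lam y) ∈ Y)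
    (Z : Set S') (hZm : MeasurableSet Z)
    (hZ : ∀ s : S', ∃! z, z ∈ Z ∧ ∃ δ : Δ, RΔ δ s = z)
    (c : S' → Λ → Δ) (hc : ∀ z ∈ Z, ∀ lam : Λ, RΔ (c z lam) (LΛ lam z) ∈ Z) :
    (∀ A : Set (S × S'), MeasurableSet A →
        (∀ γ : Γ, (σ.prod σ') (symmDiff A ((fun p : S × S' => (LΓ γ p.1, p.2)) ⁻¹' A)) = 0) →
        (∀ δ : Δ, (σ.prod σ') (symmDiff A ((fun p : S × S' => (p.1, RΔ δ p.2)) ⁻¹' A)) = 0) →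
        (∀ lam : Λ,
          (σ.prod σ')
            (symmDiff A ((fun p : S × S' => (RΛ lam p.1, LΛ lam⁻¹ p.2)) ⁻¹' A)) = 0) →
        (σ.prod σ') A = 0 ∨ (σ.prod σ') Aᶜ = 0) ↔
      AEErgodicOn
        (fun (lam : Λ) (p : S × S') =>
          (LΓ (β p.1 lam)⁻¹ (RΛ lam p.1), RΔ (c p.2 lam⁻¹) (LΛ lam⁻¹ p.2)))
        ((σ.restrict Y).prod (σ'.restrict Z)) := by
  let := h.prodMulAction h'
  rw [Measure.prod_restrict]
  refine Iff.trans ?_ (joint_ergodic_iff_aeErgodicOn_restrict (G := Γ × Δᵐᵒᵖ)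
    (IsStrictFundamentalDomain.prod hY
      (IsStrictFundamentalDomain.comp_surjective hZ MulOpposite.unop_surjective))
    (hYm.prod hZm)
    (fun g => ((h.L_mp g.1).prod (h'.R_mp g.2.unop)).quasiMeasurePreserving)
    (fun lam => ((h.R_mp lam).prod (h'.L_mp lam⁻¹)).quasiMeasurePreserving)
    (fun lam g p => Prod.ext (h.actions_comm g.1 lam p.1).symm
      (h'.actions_comm lam⁻¹ g.2.unop p.2))
    (fun lam p hp => ⟨⟨hβ p.1 hp.1 lam, hc p.2 hp.2 lam⁻¹⟩,
      ((β p.1 lam)⁻¹, .op (c p.2 lam⁻¹)), rfl⟩))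
  refine forall₂_congr fun A _ => ?_
  rw [← and_imp]
  exact imp_congr_left (h.prod_invariant_iff h' A).symm

/-- Let `(Σ, σ)` be an ME coupling of `Γ` with `Λ` and `(Σ', σ')` an ME
coupling of `Λ` with `Δ`.  Consider on `(Σ × Σ', σ × σ')` the commuting actions
`γ : (x,y) ↦ (γx, y)`, `δ : (x,y) ↦ (x, yδ)` and `λ : (x,y) ↦ (xλ, λ⁻¹y)`.  Let `Y ⊆ Σ` be a
strict fundamental domain for the `Γ`-action with induced right `Λ`-action
`y·λ = β(y,λ)⁻¹(yλ)`, and `Z ⊆ Σ'` a strict fundamental domain for the `Δ`-action with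
induced left `Λ`-action `λ·z = (λz)·c(z,λ)`.  Then the combined `Γ × Λ × Δ`-action on the
product is ergodic if and only if the diagonal `Λ`-action `λ : (y,z) ↦ (y·λ, λ⁻¹·z)` on
`(Y × Z, σ|_Y × σ'|_Z)` is ergodic. -/
theorem product_ergodic_iff_diagonal_ergodic
    {Γ Λ Δ : Type} [Group Γ] [Countable Γ] [Group Λ] [Countable Λ] [Group Δ] [Countable Δ]
    {S : Type} [MeasurableSpace S] (σ : Measure S) [SigmaFinite σ]
    (LΓ : Γ → S → S) (RΛ : Λ → S → S) (h : IsMECoupling σ LΓ RΛ)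
    {S' : Type} [MeasurableSpace S'] (σ' : Measure S') [SigmaFinite σ']
    (LΛ : Λ → S' → S') (RΔ : Δ → S' → S') (h' : IsMECoupling σ' LΛ RΔ)
    (Y : Set S) (hYm : MeasurableSet Y)
    (hY : ∀ s : S, ∃! y, y ∈ Y ∧ ∃ γ : Γ, LΓ γ s = y)
    (β : S → Λ → Γ) (hβ : ∀ y ∈ Y, ∀ lam : Λ, LΓ (β y lam)⁻¹ (RΛ lam y) ∈ Y)
    (Z : Set S') (hZm : MeasurableSet Z)
    (hZ : ∀ s : S', ∃! z, z ∈ Z ∧ ∃ δ : Δ, RΔ δ s = z)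
    (c : S' → Λ → Δ) (hc : ∀ z ∈ Z, ∀ lam : Λ, RΔ (c z lam) (LΛ lam z) ∈ Z) :
    (∀ A : Set (S × S'), MeasurableSet A →
        (∀ γ : Γ, (σ.prod σ') (symmDiff A ((fun p : S × S' => (LΓ γ p.1, p.2)) ⁻¹' A)) = 0) →
        (∀ δ : Δ, (σ.prod σ') (symmDiff A ((fun p : S × S' => (p.1, RΔ δ p.2)) ⁻¹' A)) = 0) →
        (∀ lam : Λ,
          (σ.prod σ')
            (symmDiff A ((fun p : S × S' => (RΛ lam p.1, LΛ lam⁻¹ p.2)) ⁻¹' A)) = 0) →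
        (σ.prod σ') A = 0 ∨ (σ.prod σ') Aᶜ = 0) ↔
      AEErgodicOn
        (fun (lam : Λ) (p : S × S') =>
          (LΓ (β p.1 lam)⁻¹ (RΛ lam p.1), RΔ (c p.2 lam⁻¹) (LΛ lam⁻¹ p.2)))
        ((σ.restrict Y).prod (σ'.restrict Z)) :=
  product_ergodic_iff_diagonal_ergodic_general σ LΓ RΛ h σ' LΛ RΔ h' Y hYm hY β hβ Z hZm hZ c hc
end

section
/- Let Γ act on the left and Λ act on the right on a set Σ by commuting free actions, let X ⊆ Σ be a strict fundamental domain for the Λ-action with associated cocycle α : Γ × X → Λ and induced Γ-action γ·x on X. Let H be a group, π : Γ → H and ρ : Λ → H group homomorphisms, and Φ : X → H a map satisfying ρ(α(γ, x)) = Φ(γ·x)⁻¹ π(γ) Φ(x) for all γ ∈ Γ and x ∈ X. Extend Φ to Φ̄ : Σ → H by Φ̄(xλ) := Φ(x) ρ(λ) for x ∈ X, λ ∈ Λ (this is well defined since X is a strict fundamental domain and the Λ-action is free). Then Φ̄ is fully equivariant: Φ̄(γ ω λ) = π(γ) Φ̄(ω) ρ(λ) for all γ ∈ Γ, λ ∈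 Λ and ω ∈ Σ. -/
/-- Let `Γ` act on the left and `Λ` on the right on a set `S` by commuting
free actions, `X` a strict fundamental domain for the `Λ`-action with cocycle `α`
(characterised by `(γx)·α(γ,x)⁻¹ ∈ X`) and induced action `γ·x = (γx)·α(γ,x)⁻¹`.  Let
`π : Γ → H`, `ρ : Λ → H` be homomorphisms and `Φ : X → H` satisfy
`ρ(α(γ,x)) = Φ(γ·x)⁻¹ π(γ) Φ(x)` on `X`.  If `Φ̄ : S → H` is the extension of `Φ` defined by
`Φ̄(xλ) = Φ(x) ρ(λ)` for `x ∈ X`, `λ ∈ Λ`, then `Φ̄` is fully equivariant: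
`Φ̄(γωλ) = π(γ) Φ̄(ω) ρ(λ)` for all `γ`, `λ`, `ω`. -/
theorem extension_equivariant {S Γ Λ H : Type} [Group Γ] [Group Λ] [Group H]
    (l : Γ → S → S) (r : Λ → S → S)
    (l_one : ∀ s, l 1 s = s) (l_mul : ∀ γ₁ γ₂ s, l (γ₁ * γ₂) s = l γ₁ (l γ₂ s))
    (r_one : ∀ s, r 1 s = s) (r_mul : ∀ l₁ l₂ s, r (l₁ * l₂) s = r l₂ (r l₁ s))
    (hcomm : ∀ γ lam s, l γ (r lam s) = r lam (l γ s))
    (l_free : ∀ γ s, l γ s = s → γ = 1)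
    (r_free : ∀ lam s, r lam s = s → lam = 1)
    (X : Set S)
    (hX : ∀ s : S, ∃! x, x ∈ X ∧ ∃ lam : Λ, r lam s = x)
    (α : Γ → S → Λ) (hα : ∀ γ : Γ, ∀ x ∈ X, r (α γ x)⁻¹ (l γ x) ∈ X)
    (π : Γ →* H) (ρ : Λ →* H)
    (Φ : S → H)
    (hΦ : ∀ γ : Γ, ∀ x ∈ X,
      ρ (α γ x) = (Φ (r (α γ x)⁻¹ (l γ x)))⁻¹ * π γ * Φ x)
    (Φbar : S → H)
    (hbar : ∀ x ∈ X, ∀ lam : Λ, Φbar (r lam x) = Φ x * ρ lam) :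
    ∀ (γ : Γ) (lam : Λ) (ω : S), Φbar (r lam (l γ ω)) = π γ * Φbar ω * ρ lam := by
  intro γ lam ω
  obtain ⟨x, ⟨hx, μ, hμ⟩, -⟩ := hX ω
  have hω : ω = r μ⁻¹ x := by
    rw [← hμ, ← r_mul, mul_inv_cancel, r_one]
  set y := r (α γ x)⁻¹ (l γ x) with hy
  have hyX : y ∈ X := hα γ x hx
  have hlx : l γ x = r (α γ x) y := by
    rw [hy, ← r_mul, inv_mul_cancel, r_one]
  have key : r lam (l γ ω) = r (α γ x * μ⁻¹ * lam) y := by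
    rw [hω, hcomm, hlx, r_mul, r_mul, ← r_mul, ← r_mul]
  rw [key, hbar y hyX, hω, hbar x hx]
  have h1 := hΦ γ x hx
  have h2 : Φ y * ρ (α γ x) = π γ * Φ x := by
    rw [h1, ← hy]; group
  rw [map_mul, map_mul, ← mul_assoc, ← mul_assoc, h2]
  group
end

section
/- Let G be a connected Hausdorff topological group with finite center Z(G) such that every normal subgroup of G is either contained in Z(G) or equal to G. Let L₀ ⊆ G × G be a subgroup which contains the diagonal Δ(G) = {(g, g) : g ∈ G} and which is connected as a topological subspace of G × G. Then either L₀ = Δ(G) or L₀ = G × G. -/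
/-!
The slice `N = {g | (g, 1) ∈ L₀}` is a normal subgroup of `G`, since `L₀` is normalized by
`Δ(G)`, and `(a, b) ∈ L₀` if and only if `a * b⁻¹ ∈ N`. If `N = G` this gives `L₀ = G × G`.
Otherwise `N` is central, hence finite, so the continuous map `(a, b) ↦ a * b⁻¹` sends the
connected set `L₀` into a finite, hence discrete, subset of `G`; it is therefore constantly `1`,
that is, `L₀ ⊆ Δ(G)`.
-/

/-- The diagonal subgroup `Δ(G) = {(g, g) : g ∈ G}` of `G × G`. -/
def diagonalSubgroup (G : Type) [Group G] : Subgroup (G × G) :=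
  (MonoidHom.prod (MonoidHom.id G) (MonoidHom.id G)).range

section

variable {G : Type} [Group G]

theorem mem_diagonalSubgroup {p : G × G} : p ∈ diagonalSubgroup G ↔ p.1 = p.2 := by
  constructor
  · rintro ⟨g, rfl⟩
    rfl
  · intro h
    exact ⟨p.2, Prod.ext h.symm rfl⟩

def fstSlice (L : Subgroup (G × G)) : Subgroup G :=
  L.comap (MonoidHom.inl G G)

theorem mem_fstSlice {L : Subgroup (G × G)} {g : G} : g ∈ fstSlice L ↔ (g, 1) ∈ L :=
  Iff.rfl

variable {L : Subgroup (G × G)}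

theorem mem_iff_mul_inv_mem_fstSlice (hL : diagonalSubgroup G ≤ L) {p : G × G} :
    p ∈ L ↔ p.1 * p.2⁻¹ ∈ fstSlice L := by
  have hp : p = (p.1 * p.2⁻¹, 1) * (p.2, p.2) := by simp
  nth_rw 1 [hp]
  rw [L.mul_mem_cancel_right (hL (mem_diagonalSubgroup.2 rfl)), mem_fstSlice]

theorem fstSlice_normal (hL : diagonalSubgroup G ≤ L) : (fstSlice L).Normal := by
  refine ⟨fun n hn g => ?_⟩
  have hg : (g, g) ∈ L := hL (mem_diagonalSubgroup.2 rfl)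
  simpa [mem_fstSlice] using L.mul_mem (L.mul_mem hg hn) (L.inv_mem hg)

theorem eq_top_of_fstSlice_eq_top (hL : diagonalSubgroup G ≤ L) (h : fstSlice L = ⊤) :
    L = ⊤ :=
  eq_top_iff.2 fun _ _ => (mem_iff_mul_inv_mem_fstSlice hL).2 (h ▸ Subgroup.mem_top _)

theorem le_diagonalSubgroup_of_isPreconnected [TopologicalSpace G] [IsTopologicalGroup G]
    [T1Space G] (hL : diagonalSubgroup G ≤ L) (hfin : (fstSlice L : Set G).Finite)
    (hconn : IsPreconnected (L : Set (G × G))) : L ≤ diagonalSubgroup G := by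
  intro p hp
  have hconst : p.1 * p.2⁻¹ = (1 : G × G).1 * (1 : G × G).2⁻¹ :=
    hconn.constant_of_mapsTo hfin.isDiscrete (by fun_prop)
      (fun _ hq => (mem_iff_mul_inv_mem_fstSlice hL).1 hq) hp L.one_mem
  rw [Prod.fst_one, Prod.snd_one, inv_one, mul_one, mul_inv_eq_one] at hconst
  exact mem_diagonalSubgroup.2 hconst

end

theorem diagonal_or_full_general {G : Type} [Group G] [TopologicalSpace G] [IsTopologicalGroup G]
    [T2Space G] [Finite (Subgroup.center G)]
    (hsimple : ∀ N : Subgroup G, N.Normal → N ≤ Subgroup.center G ∨ N = ⊤)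
    (L₀ : Subgroup (G × G))
    (hdiag : diagonalSubgroup G ≤ L₀)
    (hconn : IsConnected (L₀ : Set (G × G))) :
    L₀ = diagonalSubgroup G ∨ L₀ = ⊤ := by
  rcases hsimple _ (fstSlice_normal hdiag) with hcentral | htop
  · have hfin : (fstSlice L₀ : Set G).Finite :=
      (Subgroup.center G : Set G).toFinite.subset hcentral
    exact Or.inl (le_antisymm
      (le_diagonalSubgroup_of_isPreconnected hdiag hfin hconn.isPreconnected) hdiag)
  · exact Or.inr (eq_top_of_fstSlice_eq_top hdiag htop)

/-- Let `G` be a connected Hausdorff topological group with finite center,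
whose normal subgroups are all contained in the center or equal to `G`.  If `L₀ ≤ G × G` is a
subgroup containing the diagonal `Δ(G)` which is connected as a subspace of `G × G`, then
either `L₀ = Δ(G)` or `L₀ = G × G`. -/
theorem diagonal_or_full {G : Type} [Group G] [TopologicalSpace G] [IsTopologicalGroup G]
    [ConnectedSpace G] [T2Space G] [Finite (Subgroup.center G)]
    (hsimple : ∀ N : Subgroup G, N.Normal → N ≤ Subgroup.center G ∨ N = ⊤)
    (L₀ : Subgroup (G × G))
    (hdiag : diagonalSubgroup G ≤ L₀)
    (hconn : IsConnected (L₀ : Set (G × G))) :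
    L₀ = diagonalSubgroup G ∨ L₀ = ⊤ :=
  diagonal_or_full_general hsimple L₀ hdiag hconn
end

section
/- Let a countable group Λ act on the right by measure-preserving transformations on a nonzero σ-finite measure space (Σ, σ), let G be a locally compact second countable topological group with its Borel σ-algebra, and let F : Σ × Σ → G be a measurable map satisfying: (C_inv) for every λ ∈ Λ, F(xλ, yλ) = F(x, y) for σ×σ-almost every (x, y); and (C_cncl) for every λ ∈ Λ, F(xλ, y) F(x, y)⁻¹ = F(xλ, z) F(x, z)⁻¹ for σ×σ×σ-almost every (x, y, z). Then for σ-almost every x ∈ Σ there is a group homomorphism ρ_x : Λ → G such that for every λ ∈ Λ one has ρ_x(λ) = F(xλ, y) F(x, y)⁻¹ for σ-almost every y ∈ Σ. -/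
open MeasureTheory Filter Topology

/-!
By (C_cncl) and Fubini, for a.e. `x` the function `y ↦ F(xλ, y) F(x, y)⁻¹` is a.e. equal to a
constant `ρ_x(λ)`. Evaluating the defining relations at one generic `y` gives the cocycle
identity `ρ_x(λμ) = ρ_{xλ}(μ) ρ_x(λ)`, and (C_inv) together with the substitution `y ↦ yλ` gives
`ρ_{xλ}(μ) = ρ_x(λμλ⁻¹)`. Since `Λ` is countable, off a single null set both identities hold for
all `λ, μ`, and combined they say that `ρ_x` is multiplicative.
-/

section AeValue

variable {β G : Type*} [MeasurableSpace β] {μ : Measure β}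

/-- The value of an a.e. constant function (an arbitrary element otherwise). -/
noncomputable def aeValue [Nonempty G] (μ : Measure β) (g : β → G) : G :=
  Classical.epsilon fun c => g =ᵐ[μ] fun _ => c

theorem Filter.EventuallyConst.ae_eq_aeValue [Nonempty G] {g : β → G}
    (h : EventuallyConst g (ae μ)) : ∀ᵐ y ∂μ, g y = aeValue μ g :=
  Classical.epsilon_spec h.eventuallyEq_const

theorem eventuallyConst_ae_of_ae_prod [SFinite μ] [NeZero μ] {g : β → G}
    (h : ∀ᵐ p ∂μ.prod μ, g p.1 = g p.2) : EventuallyConst g (ae μ) := by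
  obtain ⟨y, hy⟩ := (Measure.ae_ae_of_ae_prod h).exists
  have : Nonempty G := ⟨g y⟩
  exact eventuallyConst_iff_exists_eventuallyEq.2 ⟨g y, hy.mono fun _ hz => hz.symm⟩

end AeValue

theorem map_mul_of_map_mul_eq_map_conj_mul {Λ G : Type*} [Group Λ] [Mul G] {c : Λ → G}
    (h : ∀ a b, c (a * b) = c (a * b * a⁻¹) * c a) (a b : Λ) : c (a * b) = c a * c b := by
  simpa [mul_assoc] using h b (b⁻¹ * a * b)

section ShiftRatio

variable {S Λ G : Type*} [MeasurableSpace S] {σ : Measure S} [Group G]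
  {r : Λ → S → S} {F : S × S → G}

def shiftRatio (r : Λ → S → S) (F : S × S → G) (x : S) (lam : Λ) (y : S) : G :=
  F (r lam x, y) * (F (x, y))⁻¹

noncomputable def aeShiftRatio (σ : Measure S) (r : Λ → S → S) (F : S × S → G) (x : S)
    (lam : Λ) : G :=
  aeValue σ (shiftRatio r F x lam)

theorem ae_ae_shiftRatio_eq [SFinite σ] [NeZero σ] {lam : Λ}
    (hcncl : ∀ᵐ q ∂σ.prod (σ.prod σ),
      shiftRatio r F q.1 lam q.2.1 = shiftRatio r F q.1 lam q.2.2) :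
    ∀ᵐ x ∂σ, ∀ᵐ y ∂σ, shiftRatio r F x lam y = aeShiftRatio σ r F x lam := by
  filter_upwards [Measure.ae_ae_of_ae_prod hcncl] with x hx
  exact (eventuallyConst_ae_of_ae_prod hx).ae_eq_aeValue

variable [Group Λ] [NeZero σ] (r_mul : ∀ l₁ l₂ s, r (l₁ * l₂) s = r l₂ (r l₁ s))
  (r_mp : ∀ lam, MeasurePreserving (r lam) σ σ)
  (hratio : ∀ lam, ∀ᵐ x ∂σ, ∀ᵐ y ∂σ,
    shiftRatio r F x lam y = aeShiftRatio σ r F x lam)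
include r_mul r_mp hratio

theorem ae_aeShiftRatio_mul (lam mu : Λ) :
    ∀ᵐ x ∂σ, aeShiftRatio σ r F x (lam * mu) =
      aeShiftRatio σ r F (r lam x) mu * aeShiftRatio σ r F x lam := by
  filter_upwards [hratio (lam * mu), hratio lam,
    (r_mp lam).quasiMeasurePreserving.ae (hratio mu)] with x h₁ h₂ h₃
  obtain ⟨y, hy₁, hy₂, hy₃⟩ := (h₁.and (h₂.and h₃)).exists
  rw [← hy₁, ← hy₂, ← hy₃]
  simp only [shiftRatio, r_mul]
  group

theorem ae_aeShiftRatio_conj [SFinite σ]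
    (hinv : ∀ lam : Λ, ∀ᵐ p ∂σ.prod σ, F (r lam p.1, r lam p.2) = F p) (lam mu : Λ) :
    ∀ᵐ x ∂σ,
      aeShiftRatio σ r F (r lam x) mu = aeShiftRatio σ r F x (lam * mu * lam⁻¹) := by
  set nu := lam * mu * lam⁻¹
  have hinv' : ∀ᵐ x ∂σ, ∀ᵐ y ∂σ, F (r lam x, r lam y) = F (x, y) :=
    Measure.ae_ae_of_ae_prod (hinv lam)
  have hshift : ∀ᵐ x ∂σ, ∀ᵐ y ∂σ,
      shiftRatio r F (r lam x) mu (r lam y) = aeShiftRatio σ r F (r lam x) mu :=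
    (r_mp lam).quasiMeasurePreserving.ae (hratio mu) |>.mono
      fun _ h => (r_mp lam).quasiMeasurePreserving.ae h
  filter_upwards [hshift, hratio nu, (r_mp nu).quasiMeasurePreserving.ae hinv', hinv']
    with x h₁ h₂ h₃ h₄
  obtain ⟨y, hy₁, hy₂, hy₃, hy₄⟩ := (h₁.and (h₂.and (h₃.and h₄))).exists
  have hr : r mu (r lam x) = r lam (r nu x) := by
    rw [← r_mul, ← r_mul, show nu * lam = lam * mu by simp [nu]]
  rw [← hy₁, ← hy₂, shiftRatio, shiftRatio, hr, hy₃, hy₄]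

end ShiftRatio

theorem ae_homomorphism_general {S Λ : Type} [Group Λ] [Countable Λ]
    [MeasurableSpace S] (σ : Measure S) [SigmaFinite σ] (hσ : σ ≠ 0)
    (r : Λ → S → S)
    (r_mul : ∀ l₁ l₂ s, r (l₁ * l₂) s = r l₂ (r l₁ s))
    (r_mp : ∀ lam, MeasurePreserving (r lam) σ σ)
    {G : Type} [Group G]
    (F : S × S → G)
    (hinv : ∀ lam : Λ, ∀ᵐ p ∂σ.prod σ, F (r lam p.1, r lam p.2) = F p)
    (hcncl : ∀ lam : Λ, ∀ᵐ q ∂σ.prod (σ.prod σ),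
      F (r lam q.1, q.2.1) * (F (q.1, q.2.1))⁻¹ =
        F (r lam q.1, q.2.2) * (F (q.1, q.2.2))⁻¹) :
    ∀ᵐ x ∂σ, ∃ ρx : Λ →* G, ∀ lam : Λ, ∀ᵐ y ∂σ,
      ρx lam = F (r lam x, y) * (F (x, y))⁻¹ := by
  have : NeZero σ := ⟨hσ⟩
  have hratio (lam : Λ) :
      ∀ᵐ x ∂σ, ∀ᵐ y ∂σ, shiftRatio r F x lam y = aeShiftRatio σ r F x lam :=
    ae_ae_shiftRatio_eq (hcncl lam)
  have htwisted : ∀ᵐ x ∂σ, ∀ a b : Λ, aeShiftRatio σ r F x (a * b) =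
      aeShiftRatio σ r F x (a * b * a⁻¹) * aeShiftRatio σ r F x a := by
    refine ae_all_iff.2 fun a => ae_all_iff.2 fun b => ?_
    filter_upwards [ae_aeShiftRatio_mul r_mul r_mp hratio a b,
      ae_aeShiftRatio_conj r_mul r_mp hratio hinv a b] with x hmul hconj
    rw [hmul, hconj]
  filter_upwards [ae_all_iff.2 hratio, htwisted] with x hx hxtw
  exact ⟨MonoidHom.mk' _ (map_mul_of_map_mul_eq_map_conj_mul hxtw),
    fun lam => (hx lam).mono fun _ hy => hy.symm⟩

/-- Lemma 5.2, first part.  Let a countable group `Λ` act on the right by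
measure-preserving transformations on a nonzero σ-finite measure space `(Σ, σ)`, let `G` be a
locally compact second countable topological group with its Borel σ-algebra, and let
`F : Σ × Σ → G` be measurable, satisfying `(C_inv)` and `(C_cncl)`.  Then for σ-a.e. `x`
there is a homomorphism `ρ_x : Λ → G` with `ρ_x(λ) = F(xλ, y) F(x, y)⁻¹` for σ-a.e. `y`. -/
theorem ae_homomorphism {S Λ : Type} [Group Λ] [Countable Λ]
    [MeasurableSpace S] (σ : Measure S) [SigmaFinite σ] (hσ : σ ≠ 0)
    (r : Λ → S → S)
    (r_one : ∀ s, r 1 s = s) (r_mul : ∀ l₁ l₂ s, r (l₁ * l₂) s = r l₂ (r l₁ s))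
    (r_mp : ∀ lam, MeasurePreserving (r lam) σ σ)
    {G : Type} [Group G] [TopologicalSpace G] [IsTopologicalGroup G]
    [LocallyCompactSpace G] [SecondCountableTopology G]
    [MeasurableSpace G] [BorelSpace G]
    (F : S × S → G) (hF : Measurable F)
    (hinv : ∀ lam : Λ, ∀ᵐ p ∂σ.prod σ, F (r lam p.1, r lam p.2) = F p)
    (hcncl : ∀ lam : Λ, ∀ᵐ q ∂σ.prod (σ.prod σ),
      F (r lam q.1, q.2.1) * (F (q.1, q.2.1))⁻¹ =
        F (r lam q.1, q.2.2) * (F (q.1, q.2.2))⁻¹) :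
    ∀ᵐ x ∂σ, ∃ ρx : Λ →* G, ∀ lam : Λ, ∀ᵐ y ∂σ,
      ρx lam = F (r lam x, y) * (F (x, y))⁻¹ :=
  ae_homomorphism_general σ hσ r r_mul r_mp F hinv hcncl
end

section
/- Let a countable group Λ act on the right by measure-preserving transformations on a nonzero σ-finite measure space (Σ, σ), let G be a locally compact second countable topological group with its Borel σ-algebra, and let Φ̃ : Σ × Σ → G be a measurable map such that: (i) for every λ ∈ Λ, Φ̃(xλ, yλ) = Φ̃(x, y) for σ²-a.e. (x, y); and (ii) Φ̃(x, z₁) Φ̃(y, z₁)⁻¹ = Φ̃(x, z₂) Φ̃(y, z₂)⁻¹ for σ⁴-a.e. (x, y, z₁, z₂). Then there exists a measurable map F : Σ × Σ → G with F(x, y) = Φ̃(x, z) Φ̃(y, z)⁻¹ for σ³-a.e. (x, y, z), and F satisfies all four conditions: (C_inv) for every λ ∈ Λ, F(xλ, yλ) = F(x, y) σ²-a.e.; (C_cncl) for every λ ∈ Λ, F(xλ, y) F(x, y)⁻¹ = F(xλ, z) F(x, z)⁻¹ σ³-a.e.; (C_sym) F(x, y) = F(y, x)⁻¹ σ²-a.e.;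 and (C_coc) F(x, y) F(y, z) = F(x, z) σ³-a.e. -/
/-!
Condition (ii) says that `Φ̃(x, z) Φ̃(y, z)⁻¹` does not depend on `z` almost surely, so by Fubini
there is a single base point `z₀` for which `F(x, y) := Φ̃(x, z₀) Φ̃(y, z₀)⁻¹` agrees with it for
a.e. `(x, y, z)`. Being of the form `f x (f y)⁻¹`, this `F` satisfies `(C_cncl)`, `(C_sym)` and
`(C_coc)` everywhere. For `(C_inv)`, apply the diagonal action to `(x, y, z)`, which preserves
`σ³`, and use (i) on `(x, z)` and `(y, z)`; the auxiliary variable `z` is then integrated out.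
-/

namespace MeasureTheory

variable {α β γ δ : Type*} [MeasurableSpace α] [MeasurableSpace β] [MeasurableSpace γ]
  [MeasurableSpace δ]

theorem ae_of_ae_prod_fst {μ : Measure α} {ν : Measure β} [SFinite ν] (hν : ν ≠ 0) {p : α → Prop}
    (h : ∀ᵐ q ∂μ.prod ν, p q.1) : ∀ᵐ a ∂μ, p a := by
  have := ae_neBot.2 hν
  exact (Measure.ae_ae_of_ae_prod h).mono fun _ ha => ha.exists.choose_spec

theorem exists_ae_of_ae_prod {μ : Measure α} {ν : Measure β} [SFinite μ] [SFinite ν]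
    (hν : ν ≠ 0) {p : α → β → Prop} (h : ∀ᵐ q ∂μ.prod ν, p q.1 q.2) :
    ∃ b, ∀ᵐ a ∂μ, p a b := by
  have := ae_neBot.2 hν
  exact (Measure.ae_ae_of_ae_prod
    ((Measure.measurePreserving_swap (μ := ν) (ν := μ)).quasiMeasurePreserving.ae h)).exists

theorem measurePreserving_prodAssoc_prodAssoc (μ₁ : Measure α) (μ₂ : Measure β)
    (μ₃ : Measure γ) (μ₄ : Measure δ) [SFinite μ₁] [SFinite μ₂] [SFinite μ₃] [SFinite μ₄] :
    MeasurePreserving (fun q : (α × (β × γ)) × δ => (q.1.1, (q.1.2.1, (q.1.2.2, q.2))))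
      ((μ₁.prod (μ₂.prod μ₃)).prod μ₄) (μ₁.prod (μ₂.prod (μ₃.prod μ₄))) :=
  ((MeasurePreserving.id μ₁).prod (measurePreserving_prodAssoc μ₂ μ₃ μ₄)).comp
    (measurePreserving_prodAssoc μ₁ (μ₂.prod μ₃) μ₄)

theorem ae_comp_prodMap_eq_of_ae_eq_mul_inv {G : Type*} [Group G] {μ : Measure α} [SFinite μ]
    (hμ : μ ≠ 0) {T : α → α} (hT : MeasurePreserving T μ μ) {Φ F : α × α → G}
    (hΦ : ∀ᵐ p ∂μ.prod μ, Φ (T p.1, T p.2) = Φ p)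
    (hF : ∀ᵐ q ∂μ.prod (μ.prod μ), F (q.1, q.2.1) = Φ (q.1, q.2.2) * (Φ (q.2.1, q.2.2))⁻¹) :
    ∀ᵐ p ∂μ.prod μ, F (T p.1, T p.2) = F p := by
  have hT₃ : MeasurePreserving (fun q : α × (α × α) => (T q.1, (T q.2.1, T q.2.2)))
      (μ.prod (μ.prod μ)) (μ.prod (μ.prod μ)) := hT.prod (hT.prod hT)
  have hxz : Measure.QuasiMeasurePreserving (fun q : α × (α × α) => (q.1, q.2.2))
      (μ.prod (μ.prod μ)) (μ.prod μ) :=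
    QuasiMeasurePreserving.prodMap (MeasurePreserving.id μ).quasiMeasurePreserving
      Measure.quasiMeasurePreserving_snd
  have hxyz : ∀ᵐ q ∂μ.prod (μ.prod μ), F (T q.1, T q.2.1) = F (q.1, q.2.1) := by
    filter_upwards [hF, hT₃.quasiMeasurePreserving.ae hF, hxz.ae hΦ,
      Measure.quasiMeasurePreserving_snd.ae hΦ] with q hq hTq hx hy
    rw [hq, hTq, hx, hy]
  exact ae_of_ae_prod_fst hμ ((measurePreserving_prodAssoc μ μ μ).quasiMeasurePreserving.ae hxyz)

end MeasureTheory

open MeasureTheory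

theorem exists_F_of_Phi_general {S Λ : Type}
    [MeasurableSpace S] (σ : Measure S) [SigmaFinite σ] (hσ : σ ≠ 0)
    (r : Λ → S → S)
    (r_mp : ∀ lam, MeasurePreserving (r lam) σ σ)
    {G : Type} [Group G] [TopologicalSpace G] [IsTopologicalGroup G]
    [SecondCountableTopology G]
    [MeasurableSpace G] [BorelSpace G]
    (Φt : S × S → G) (hΦt : Measurable Φt)
    (hi : ∀ lam : Λ, ∀ᵐ p ∂σ.prod σ, Φt (r lam p.1, r lam p.2) = Φt p)
    (hii : ∀ᵐ q ∂σ.prod (σ.prod (σ.prod σ)),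
      Φt (q.1, q.2.2.1) * (Φt (q.2.1, q.2.2.1))⁻¹ =
        Φt (q.1, q.2.2.2) * (Φt (q.2.1, q.2.2.2))⁻¹) :
    ∃ F : S × S → G, Measurable F ∧
      (∀ᵐ q ∂σ.prod (σ.prod σ),
        F (q.1, q.2.1) = Φt (q.1, q.2.2) * (Φt (q.2.1, q.2.2))⁻¹) ∧
      (∀ lam : Λ, ∀ᵐ p ∂σ.prod σ, F (r lam p.1, r lam p.2) = F p) ∧
      (∀ lam : Λ, ∀ᵐ q ∂σ.prod (σ.prod σ),
        F (r lam q.1, q.2.1) * (F (q.1, q.2.1))⁻¹ =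
          F (r lam q.1, q.2.2) * (F (q.1, q.2.2))⁻¹) ∧
      (∀ᵐ p ∂σ.prod σ, F p = (F (p.2, p.1))⁻¹) ∧
      (∀ᵐ q ∂σ.prod (σ.prod σ),
        F (q.1, q.2.1) * F (q.2.1, q.2.2) = F (q.1, q.2.2)) := by
  obtain ⟨z₀, hz₀⟩ := exists_ae_of_ae_prod hσ (p := fun (t : S × (S × S)) z =>
      Φt (t.1, t.2.2) * (Φt (t.2.1, t.2.2))⁻¹ = Φt (t.1, z) * (Φt (t.2.1, z))⁻¹)
    ((measurePreserving_prodAssoc_prodAssoc σ σ σ σ).quasiMeasurePreserving.ae hii)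
  let F : S × S → G := fun p => Φt (p.1, z₀) * (Φt (p.2, z₀))⁻¹
  have hF : ∀ᵐ q ∂σ.prod (σ.prod σ), F (q.1, q.2.1) =
      Φt (q.1, q.2.2) * (Φt (q.2.1, q.2.2))⁻¹ := hz₀.mono fun _ h => h.symm
  refine ⟨F, by fun_prop, hF,
    fun lam => ae_comp_prodMap_eq_of_ae_eq_mul_inv hσ (r_mp lam) (hi lam) hF,
    fun _ => ae_of_all _ fun _ => ?_, ae_of_all _ fun _ => ?_, ae_of_all _ fun _ => ?_⟩ <;>
  · simp only [F]
    group

/-- Claim 5.6.  Let a countable group `Λ` act on the right by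
measure-preserving transformations on a nonzero σ-finite measure space `(Σ, σ)`, let `G` be a
locally compact second countable topological group with its Borel σ-algebra, and let
`Φ̃ : Σ × Σ → G` be measurable with (i) `Φ̃(xλ, yλ) = Φ̃(x, y)` σ²-a.e. for every `λ` and
(ii) `Φ̃(x, z₁) Φ̃(y, z₁)⁻¹ = Φ̃(x, z₂) Φ̃(y, z₂)⁻¹` σ⁴-a.e.  Then there is a measurable
`F : Σ × Σ → G` with `F(x, y) = Φ̃(x, z) Φ̃(y, z)⁻¹` σ³-a.e., satisfying the four conditions
`(C_inv)`, `(C_cncl)`, `(C_sym)` and `(C_coc)`. -/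
theorem exists_F_of_Phi {S Λ : Type} [Group Λ] [Countable Λ]
    [MeasurableSpace S] (σ : Measure S) [SigmaFinite σ] (hσ : σ ≠ 0)
    (r : Λ → S → S)
    (r_one : ∀ s, r 1 s = s) (r_mul : ∀ l₁ l₂ s, r (l₁ * l₂) s = r l₂ (r l₁ s))
    (r_mp : ∀ lam, MeasurePreserving (r lam) σ σ)
    {G : Type} [Group G] [TopologicalSpace G] [IsTopologicalGroup G]
    [LocallyCompactSpace G] [SecondCountableTopology G]
    [MeasurableSpace G] [BorelSpace G]
    (Φt : S × S → G) (hΦt : Measurable Φt)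
    (hi : ∀ lam : Λ, ∀ᵐ p ∂σ.prod σ, Φt (r lam p.1, r lam p.2) = Φt p)
    (hii : ∀ᵐ q ∂σ.prod (σ.prod (σ.prod σ)),
      Φt (q.1, q.2.2.1) * (Φt (q.2.1, q.2.2.1))⁻¹ =
        Φt (q.1, q.2.2.2) * (Φt (q.2.1, q.2.2.2))⁻¹) :
    ∃ F : S × S → G, Measurable F ∧
      (∀ᵐ q ∂σ.prod (σ.prod σ),
        F (q.1, q.2.1) = Φt (q.1, q.2.2) * (Φt (q.2.1, q.2.2))⁻¹) ∧
      (∀ lam : Λ, ∀ᵐ p ∂σ.prod σ, F (r lam p.1, r lam p.2) = F p) ∧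
      (∀ lam : Λ, ∀ᵐ q ∂σ.prod (σ.prod σ),
        F (r lam q.1, q.2.1) * (F (q.1, q.2.1))⁻¹ =
          F (r lam q.1, q.2.2) * (F (q.1, q.2.2))⁻¹) ∧
      (∀ᵐ p ∂σ.prod σ, F p = (F (p.2, p.1))⁻¹) ∧
      (∀ᵐ q ∂σ.prod (σ.prod σ),
        F (q.1, q.2.1) * F (q.2.1, q.2.2) = F (q.1, q.2.2)) :=
  exists_F_of_Phi_general σ hσ r r_mp Φt hΦt hi hii
end

section
/- Let Γ and Λ be countable groups, (X, μ) a finite measure space with 0 < μ(X) < ∞ and a measure-preserving Γ-action (γ, x) ↦ γ·x, and α : Γ × X → Λ a measurable cocycle (α(γ₁γ₂, x) = α(γ₁, γ₂·x) α(γ₂, x) for μ-a.e. x). Let V be a complex Hilbert space and π a unitary representation of Λ on V which contains almost invariant vectors: there is a sequence of unit vectors v_n ∈ V with ‖π(λ)v_n − v_n‖ → 0 for every λ ∈ Λ. Then the induced Γ-representation on L²(X, V) contains almost invariant vectors: there exists a sequence of measurable functions f_n : X → V with ∫_X ‖f_n(x)‖² dμ(x) = 1 such that for every γ ∈ Γ,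 ∫_X ‖π(α(γ⁻¹, x)⁻¹)(f_n(γ⁻¹·x)) − f_n(x)‖² dμ(x) → 0 as n → ∞. -/
open MeasureTheory Filter Topology

/-!
On a finite measure space the constant functions `x ↦ c • v` already lie in `L²(X, V)`.
Taking unit almost invariant vectors `vₙ` and `c = μ(X)^{-1/2}`, the displacement of `c • vₙ` under
`γ` at `x` has norm `c ‖π(α(γ⁻¹, x)⁻¹) vₙ - vₙ‖`, which tends to `0` for every `x` and is bounded
by `2c`; bounded convergence on the finite measure space gives the claim.
-/

theorem tendsto_integral_comp_of_countable {X Λ : Type*} [MeasurableSpace X] {μ : Measure X}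
    [IsFiniteMeasure μ] [Countable Λ] {h : X → Λ}
    (hh : ∀ lam, MeasurableSet (h ⁻¹' {lam})) {F : ℕ → Λ → ℝ} {G : Λ → ℝ} {C : ℝ}
    (hF : ∀ n lam, ‖F n lam‖ ≤ C) (hlim : ∀ lam, Tendsto (fun n => F n lam) atTop (𝓝 (G lam))) :
    Tendsto (fun n => ∫ x, F n (h x) ∂μ) atTop (𝓝 (∫ x, G (h x) ∂μ)) := by
  let _ : MeasurableSpace Λ := ⊤
  have hh_meas : Measurable h := measurable_to_countable' hh
  exact tendsto_integral_of_dominated_convergence (fun _ => C)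
    (fun n => (measurable_from_top.comp hh_meas).aestronglyMeasurable) (integrable_const C)
    (fun n => ae_of_all _ fun x => hF n (h x)) (ae_of_all _ fun x => hlim (h x))

theorem LinearIsometryEquiv.norm_map_sub_le {R E : Type*} [Semiring R]
    [SeminormedAddCommGroup E] [Module R E] (U : E ≃ₗᵢ[R] E) (v : E) :
    ‖U v - v‖ ≤ 2 * ‖v‖ :=
  calc ‖U v - v‖ ≤ ‖U v‖ + ‖v‖ := norm_sub_le _ _
    _ = 2 * ‖v‖ := by rw [U.norm_map, two_mul]

theorem LinearIsometryEquiv.norm_map_smul_sub_smul {𝕜 E : Type*} [NormedField 𝕜]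
    [SeminormedAddCommGroup E] [NormedSpace 𝕜 E] (U : E ≃ₗᵢ[𝕜] E) (c : 𝕜) (v : E) :
    ‖U (c • v) - c • v‖ = ‖c‖ * ‖U v - v‖ := by
  rw [map_smul, ← smul_sub, norm_smul]

theorem integral_norm_sq_inv_sqrt_measure_smul {X 𝕜 E : Type*} [MeasurableSpace X]
    {μ : Measure X} [IsFiniteMeasure μ] [RCLike 𝕜] [SeminormedAddCommGroup E]
    [NormedSpace 𝕜 E] (hμ : μ Set.univ ≠ 0) {v : E} (hv : ‖v‖ = 1) :
    ∫ _x, ‖(((√(μ.real Set.univ))⁻¹ : ℝ) : 𝕜) • v‖ ^ 2 ∂μ = 1 := by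
  have hm : 0 < μ.real Set.univ :=
    ENNReal.toReal_pos hμ (measure_ne_top μ Set.univ)
  rw [integral_const, smul_eq_mul, norm_smul, RCLike.norm_ofReal, hv, mul_one, sq_abs,
    inv_pow, Real.sq_sqrt hm.le, mul_inv_cancel₀ hm.ne']

theorem induced_has_almost_invariant_vectors_general {Γ Λ X V : Type}
    [Group Γ] [Group Λ] [Countable Λ]
    [MeasurableSpace X] (μ : Measure X)
    (hpos : 0 < μ Set.univ) (hfin : μ Set.univ < ⊤)
    (a : Γ → X → X)
    (α : Γ → X → Λ)
    (hαmeas : ∀ (γ : Γ) (lam : Λ), MeasurableSet {x | α γ x = lam})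
    [NormedAddCommGroup V] [InnerProductSpace ℂ V]
    [MeasurableSpace V]
    (π : Λ →* (V ≃ₗᵢ[ℂ] V))
    (hAI : ∃ v : ℕ → V, (∀ n, ‖v n‖ = 1) ∧
      ∀ lam : Λ, Tendsto (fun n => ‖(π lam) (v n) - v n‖) atTop (nhds 0)) :
    ∃ f : ℕ → X → V, (∀ n, Measurable (f n)) ∧
      (∀ n, ∫ x, ‖f n x‖ ^ 2 ∂μ = 1) ∧
      ∀ γ : Γ, Tendsto
        (fun n => ∫ x, ‖(π ((α γ⁻¹ x)⁻¹)) (f n (a γ⁻¹ x)) - f n x‖ ^ 2 ∂μ)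
        atTop (nhds 0) := by
  obtain ⟨v, hv_norm, hv_lim⟩ := hAI
  have : IsFiniteMeasure μ := ⟨hfin⟩
  set c : ℂ := (((√(μ.real Set.univ))⁻¹ : ℝ) : ℂ)
  refine ⟨fun n _ => c • v n, fun n => measurable_const,
    fun n => integral_norm_sq_inv_sqrt_measure_smul hpos.ne' (hv_norm n), fun γ => ?_⟩
  have h_bound : ∀ n (lam : Λ), ‖‖c‖ ^ 2 * ‖π lam⁻¹ (v n) - v n‖ ^ 2‖ ≤ ‖c‖ ^ 2 * 2 ^ 2 := by
    intro n lam
    rw [Real.norm_of_nonneg (by positivity)]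
    have h_disp := (π lam⁻¹).norm_map_sub_le (v n)
    rw [hv_norm n, mul_one] at h_disp
    gcongr
  simp_rw [LinearIsometryEquiv.norm_map_smul_sub_smul, mul_pow]
  simpa using tendsto_integral_comp_of_countable (μ := μ) (hαmeas γ⁻¹) h_bound
    (fun lam => ((hv_lim lam⁻¹).pow 2).const_mul (‖c‖ ^ 2))

/-- Lemma 8.1.  Let `Γ`, `Λ` be countable groups, `(X, μ)` a finite
measure space with `0 < μ(X) < ∞` and a measure-preserving `Γ`-action `a`, and
`α : Γ × X → Λ` a measurable cocycle.  If a unitary representation `π` of `Λ` on a complex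
Hilbert space `V` contains almost invariant vectors, then the induced `Γ`-representation on
`L²(X, V)` contains almost invariant vectors. -/
theorem induced_has_almost_invariant_vectors {Γ Λ X V : Type}
    [Group Γ] [Countable Γ] [Group Λ] [Countable Λ]
    [MeasurableSpace X] (μ : Measure X)
    (hpos : 0 < μ Set.univ) (hfin : μ Set.univ < ⊤)
    (a : Γ → X → X)
    (a_one : ∀ x, a 1 x = x) (a_mul : ∀ γ₁ γ₂ x, a (γ₁ * γ₂) x = a γ₁ (a γ₂ x))
    (ha : ∀ γ, MeasurePreserving (a γ) μ μ)
    (α : Γ → X → Λ)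
    (hαmeas : ∀ (γ : Γ) (lam : Λ), MeasurableSet {x | α γ x = lam})
    (hcoc : ∀ γ₁ γ₂ : Γ, ∀ᵐ x ∂μ, α (γ₁ * γ₂) x = α γ₁ (a γ₂ x) * α γ₂ x)
    [NormedAddCommGroup V] [InnerProductSpace ℂ V] [CompleteSpace V]
    [MeasurableSpace V] [BorelSpace V]
    (π : Λ →* (V ≃ₗᵢ[ℂ] V))
    (hAI : ∃ v : ℕ → V, (∀ n, ‖v n‖ = 1) ∧
      ∀ lam : Λ, Tendsto (fun n => ‖(π lam) (v n) - v n‖) atTop (nhds 0)) :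
    ∃ f : ℕ → X → V, (∀ n, Measurable (f n)) ∧
      (∀ n, ∫ x, ‖f n x‖ ^ 2 ∂μ = 1) ∧
      ∀ γ : Γ, Tendsto
        (fun n => ∫ x, ‖(π ((α γ⁻¹ x)⁻¹)) (f n (a γ⁻¹ x)) - f n x‖ ^ 2 ∂μ)
        atTop (nhds 0) :=
  induced_has_almost_invariant_vectors_general μ hpos hfin a α hαmeas π hAI
end

section
/- Let (Ω, m) be an ME coupling of countable groups Γ (acting on the left) and Λ (acting on the right) which is ergodic: every measurable subset of Ω invariant under both the Γ-action and the Λ-action is null or conull. Let X ⊆ Ω be a strict fundamental domain for the Λ-action with cocycle α : Γ × X → Λ and induced Γ-action γ·x, and Y ⊆ Ω a strict fundamental domain for the Γ-action with induced Λ-action y·λ; put μ = m|_X and ν = m|_Y. Let V be a complex Hilbert space and π a unitary representation of Λ on V. Assume the following (which holds whenever π is weakly mixing): the only measurable g : Y → V with ∫_Y ‖g‖² dν < ∞ satisfying g(y·λ) = π(λ⁻¹)(g(y)) for every λ ∈ Λ and ν-a.e. y, is g = 0 ν-a.e. Then the induced Γ-representation on L²(X, V) has no nonzero invariant vectors: every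 measurable φ : X → V with ∫_X ‖φ‖² dμ < ∞ satisfying π(α(γ, x)⁻¹)(φ(γ·x)) = φ(x) for every γ ∈ Γ and μ-a.e. x ∈ X must vanish μ-almost everywhere. -/
open MeasureTheory Filter Topology

/-!
An invariant vector `φ` of the induced representation spreads out along the `Λ`-orbits to a
function `Φ` on `Ω` with `Φ (ω λ) = π λ⁻¹ (Φ ω)` which, by the invariance of `φ`, is also
`Γ`-invariant. Composing `Φ` with a bounded `π`-equivariant homeomorphism of `V` onto its unit
ball gives a function that lies in `L²(Y, V)` because `Y` has finite measure, and satisfies the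
equivariance of the hypothesis on `Y`, since `Φ (β⁻¹ y λ) = Φ (y λ)`. So it vanishes on `Y`,
hence so does `Φ`; being `Γ`-invariant and `Y` meeting every `Γ`-orbit, `Φ` vanishes on all of
`Ω`, and in particular `φ = Φ` vanishes on `X`.
-/

section Family

variable {G Ω : Type} [MeasurableSpace Ω] {m : Measure Ω} {T : G → Ω → Ω}

lemma ae_forall_eq_one_of_essFree [Group G] [Countable G]
    (hT : ∀ g : G, g ≠ 1 → m {ω | T g ω = ω} = 0) :
    ∀ᵐ ω ∂m, ∀ g, T g ω = ω → g = 1 := by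
  refine ae_all_iff.2 fun g => ?_
  by_cases hg : g = 1
  · exact ae_of_all _ fun _ _ => hg
  · exact (measure_eq_zero_iff_ae_notMem.1 (hT g hg)).mono fun _ hω hfix => absurd hfix hω

lemma ae_forall_translate_of_ae_restrict [Countable G]
    (hT : ∀ g, Measure.QuasiMeasurePreserving (T g) m m) {s : Set Ω} (hs : MeasurableSet s)
    {p : Ω → Prop} (hp : ∀ᵐ x ∂m.restrict s, p x) :
    ∀ᵐ ω ∂m, ∀ g, T g ω ∈ s → p (T g ω) :=
  ae_all_iff.2 fun g => (hT g).ae ((ae_restrict_iff' hs).1 hp)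

lemma exists_measurable_selector [Countable G] [Nonempty G] (hT : ∀ g, Measurable (T g))
    {s : Set Ω} (hs : MeasurableSet s) (hcov : ∀ ω, ∃ g, T g ω ∈ s) :
    ∃ σ : Ω → G, (∀ ω, T (σ ω) ω ∈ s) ∧ ∀ {β : Type} [MeasurableSpace β] {F : G → Ω → β},
      (∀ g, Measurable (F g)) → Measurable fun ω => F (σ ω) ω := by
  classical
  obtain ⟨u, hu⟩ := exists_surjective_nat G
  have hcov' : ∀ ω, ∃ n, T (u n) ω ∈ s := fun ω => by
    obtain ⟨g, hg⟩ := hcov ω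
    obtain ⟨n, rfl⟩ := hu g
    exact ⟨n, hg⟩
  exact ⟨fun ω => u (Nat.find (hcov' ω)), fun ω => Nat.find_spec (hcov' ω),
    fun hF => Measurable.find (fun n => hF (u n)) (fun n => hT (u n) hs) hcov'⟩

end Family

section UnitBall

variable {E : Type} [NormedAddCommGroup E]

lemma coe_unitBall_linearIsometryEquiv_apply [NormedSpace ℂ E] (f : E ≃ₗᵢ[ℂ] E) (x : E) :
    (Homeomorph.unitBall (f x) : E) = f (Homeomorph.unitBall x) := by
  simp only [Homeomorph.unitBall_apply_coe, OpenPartialHomeomorph.univUnitBall_apply,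
    f.norm_map, map_real_smul f f.continuous]

lemma coe_unitBall_eq_zero [NormedSpace ℝ E] {x : E} :
    (Homeomorph.unitBall x : E) = 0 ↔ x = 0 := by
  refine ⟨fun hx => Homeomorph.unitBall.injective (Subtype.ext ?_), ?_⟩
  · rw [hx, Homeomorph.coe_unitBall_apply_zero]
  · rintro rfl
    exact Homeomorph.coe_unitBall_apply_zero

lemma measurable_coe_unitBall [NormedSpace ℝ E] [MeasurableSpace E] [BorelSpace E] :
    Measurable fun x : E => (Homeomorph.unitBall x : E) :=
  (continuous_subtype_val.comp Homeomorph.unitBall.continuous).measurable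

lemma integrable_norm_unitBall_sq [NormedSpace ℝ E] [MeasurableSpace E] [BorelSpace E]
    {α : Type} [MeasurableSpace α] {μ : Measure α} [IsFiniteMeasure μ] {f : α → E}
    (hf : Measurable f) : Integrable (fun x => ‖(Homeomorph.unitBall (f x) : E)‖ ^ 2) μ := by
  refine Integrable.of_bound
    ((measurable_coe_unitBall.comp hf).norm.pow_const 2).aestronglyMeasurable 1
    (ae_of_all _ fun x => ?_)
  have hlt := mem_ball_zero_iff.1 (Homeomorph.unitBall (f x)).2
  rw [Real.norm_of_nonneg (by positivity)]
  exact pow_le_one₀ (norm_nonneg _) hlt.le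

end UnitBall

namespace IsMECoupling

variable {Γ Λ Ω : Type} [Group Γ] [Group Λ] [MeasurableSpace Ω] {m : Measure Ω}
  {L : Γ → Ω → Ω} {R : Λ → Ω → Ω}

lemma pairwise_aedisjoint_preimage_L (h : IsMECoupling m L R) {Y : Set Ω}
    (hY : ∀ s : Ω, ∃! y, y ∈ Y ∧ ∃ γ : Γ, L γ s = y) :
    Pairwise (Function.onFun (AEDisjoint m) fun γ => L γ ⁻¹' Y) := by
  intro γ δ hne
  refine measure_mono_null ?_ (h.L_essFree (γ⁻¹ * δ) (inv_mul_eq_one.not.2 hne))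
  rintro ω ⟨hγ, hδ⟩
  have heq : L γ ω = L δ ω := (hY ω).unique ⟨hγ, γ, rfl⟩ ⟨hδ, δ, rfl⟩
  change L (γ⁻¹ * δ) ω = ω
  rw [h.L_mul, ← heq, ← h.L_mul, inv_mul_cancel, h.L_one]

lemma measure_le_of_pairwise_aedisjoint [Countable Γ] (h : IsMECoupling m L R) {Y Y' : Set Ω}
    (hYm : MeasurableSet Y) (hY'm : MeasurableSet Y') (hY' : ∀ᵐ ω ∂m, ∃ γ, L γ ω ∈ Y')
    (hdisj : Pairwise (Function.onFun (AEDisjoint m) fun γ => L γ ⁻¹' Y)) : m Y ≤ m Y' := by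
  have hpiece : ∀ γ, m (Y ∩ L γ ⁻¹' Y') = m (L γ⁻¹ ⁻¹' Y ∩ Y') := fun γ => by
    rw [← (h.L_mp γ).measure_preimage (((h.L_mp γ⁻¹).measurable hYm).inter hY'm).nullMeasurableSet]
    congr 1
    ext ω
    simp only [Set.mem_inter_iff, Set.mem_preimage, ← h.L_mul, inv_mul_cancel, h.L_one]
  calc m Y ≤ m (⋃ γ, Y ∩ L γ ⁻¹' Y') :=
        measure_mono_ae (hY'.mono fun ω ⟨γ, hγ⟩ hωY => Set.mem_iUnion.2 ⟨γ, hωY, hγ⟩)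
    _ ≤ ∑' γ, m (Y ∩ L γ ⁻¹' Y') := measure_iUnion_le _
    _ = ∑' γ, m (L γ⁻¹ ⁻¹' Y ∩ Y') := tsum_congr hpiece
    _ = m (⋃ γ, L γ⁻¹ ⁻¹' Y ∩ Y') :=
        (measure_iUnion₀ ((hdisj.comp_of_injective inv_injective).mono fun _ _ hd =>
          hd.mono Set.inter_subset_left Set.inter_subset_left)
          fun γ => (((h.L_mp γ⁻¹).measurable hYm).inter hY'm).nullMeasurableSet).symm
    _ ≤ m Y' := measure_mono (Set.iUnion_subset fun _ => Set.inter_subset_right)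

lemma measure_ne_top_of_existsUnique [Countable Γ] (h : IsMECoupling m L R) {Y : Set Ω}
    (hYm : MeasurableSet Y) (hY : ∀ s : Ω, ∃! y, y ∈ Y ∧ ∃ γ : Γ, L γ s = y) : m Y ≠ ⊤ := by
  obtain ⟨Y', hY'm, hY', -, hY'fin⟩ := h.fund_L
  exact ne_top_of_le_ne_top hY'fin
    (h.measure_le_of_pairwise_aedisjoint hYm hY'm hY' (h.pairwise_aedisjoint_preimage_L hY))

lemma eq_of_R_mem (h : IsMECoupling m L R) {X : Set Ω}
    (hX : ∀ s : Ω, ∃! x, x ∈ X ∧ ∃ lam : Λ, R lam s = x) {ω : Ω} (hω : ∀ l, R l ω = ω → l = 1)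
    {l₁ l₂ : Λ} (h₁ : R l₁ ω ∈ X) (h₂ : R l₂ ω ∈ X) : l₁ = l₂ := by
  have heq : R l₁ ω = R l₂ ω := (hX ω).unique ⟨h₁, l₁, rfl⟩ ⟨h₂, l₂, rfl⟩
  have hfix : R (l₂ * l₁⁻¹) ω = ω := by
    rw [h.R_mul, ← heq, ← h.R_mul, mul_inv_cancel, h.R_one]
  exact (mul_inv_eq_one.1 (hω _ hfix)).symm

section Extension

variable {V : Type} [NormedAddCommGroup V] [NormedSpace ℂ V]

/-- With `σ ω` moving `ω` into `X`, this is `Φ (x λ) = π λ⁻¹ (φ x)` for `x ∈ X`. -/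
def equivariantExtension (R : Λ → Ω → Ω) (π : Λ →* (V ≃ₗᵢ[ℂ] V)) (σ : Ω → Λ) (φ : Ω → V)
    (ω : Ω) : V :=
  π (σ ω) (φ (R (σ ω) ω))

variable {X : Set Ω} {π : Λ →* (V ≃ₗᵢ[ℂ] V)} {σ : Ω → Λ} {φ : Ω → V}

lemma equivariantExtension_R_apply (h : IsMECoupling m L R)
    (hX : ∀ s : Ω, ∃! x, x ∈ X ∧ ∃ lam : Λ, R lam s = x) (hσ : ∀ ω, R (σ ω) ω ∈ X) {ω : Ω}
    (hω : ∀ l, R l ω = ω → l = 1) (l : Λ) :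
    equivariantExtension R π σ φ (R l ω) = π l⁻¹ (equivariantExtension R π σ φ ω) := by
  have hσl : σ (R l ω) = l⁻¹ * σ ω := by
    have hmem : R (l * σ (R l ω)) ω ∈ X := by rw [h.R_mul]; exact hσ _
    rw [← h.eq_of_R_mem hX hω hmem (hσ ω), inv_mul_cancel_left]
  simp only [equivariantExtension, hσl, map_mul, LinearIsometryEquiv.coe_mul, Function.comp_apply,
    ← h.R_mul, mul_inv_cancel_left]

lemma equivariantExtension_L_apply (h : IsMECoupling m L R)
    (hX : ∀ s : Ω, ∃! x, x ∈ X ∧ ∃ lam : Λ, R lam s = x) {α : Γ → Ω → Λ}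
    (hα : ∀ γ : Γ, ∀ x ∈ X, R (α γ x)⁻¹ (L γ x) ∈ X) (hσ : ∀ ω, R (σ ω) ω ∈ X) {γ : Γ} {ω : Ω}
    (hω : ∀ l, R l (L γ ω) = L γ ω → l = 1)
    (hφ : π (α γ (R (σ ω) ω))⁻¹ (φ (R (α γ (R (σ ω) ω))⁻¹ (L γ (R (σ ω) ω)))) =
      φ (R (σ ω) ω)) :
    equivariantExtension R π σ φ (L γ ω) = equivariantExtension R π σ φ ω := by
  have hσγ : σ (L γ ω) = σ ω * (α γ (R (σ ω) ω))⁻¹ := by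
    refine h.eq_of_R_mem hX hω (hσ _) ?_
    rw [h.R_mul, ← h.actions_comm]
    exact hα γ _ (hσ ω)
  rw [equivariantExtension, hσγ, h.R_mul, ← h.actions_comm, map_mul, LinearIsometryEquiv.coe_mul,
    Function.comp_apply, hφ, equivariantExtension]

lemma equivariantExtension_eq_self (h : IsMECoupling m L R)
    (hX : ∀ s : Ω, ∃! x, x ∈ X ∧ ∃ lam : Λ, R lam s = x) (hσ : ∀ ω, R (σ ω) ω ∈ X) {x : Ω}
    (hxX : x ∈ X) (hx : ∀ l, R l x = x → l = 1) : equivariantExtension R π σ φ x = φ x := by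
  have hσ1 : σ x = 1 := h.eq_of_R_mem hX hx (hσ x) (by rwa [h.R_one])
  simp only [equivariantExtension, hσ1, map_one, h.R_one, LinearIsometryEquiv.coe_one, id_eq]

lemma exists_invariant_extension [Countable Γ] [Countable Λ] [MeasurableSpace V] [BorelSpace V]
    (h : IsMECoupling m L R) (hXm : MeasurableSet X)
    (hX : ∀ s : Ω, ∃! x, x ∈ X ∧ ∃ lam : Λ, R lam s = x) {α : Γ → Ω → Λ}
    (hα : ∀ γ : Γ, ∀ x ∈ X, R (α γ x)⁻¹ (L γ x) ∈ X) (hφm : Measurable φ)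
    (hφ : ∀ γ : Γ, ∀ᵐ x ∂m.restrict X, π (α γ x)⁻¹ (φ (R (α γ x)⁻¹ (L γ x))) = φ x) :
    ∃ Φ : Ω → V, Measurable Φ ∧ (∀ᵐ ω ∂m, ∀ l, Φ (R l ω) = π l⁻¹ (Φ ω)) ∧
      (∀ᵐ ω ∂m, ∀ γ, Φ (L γ ω) = Φ ω) ∧ Φ =ᵐ[m.restrict X] φ := by
  have hR : ∀ l, Measure.QuasiMeasurePreserving (R l) m m :=
    fun l => (h.R_mp l).quasiMeasurePreserving
  obtain ⟨σ, hσ, hσm⟩ := exists_measurable_selector (fun l => (hR l).measurable) hXm fun ω => by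
    obtain ⟨x, ⟨hxX, l, rfl⟩, -⟩ := hX ω
    exact ⟨l, hxX⟩
  have hfree := ae_forall_eq_one_of_essFree h.R_essFree
  refine ⟨equivariantExtension R π σ φ,
    hσm fun l => (π l).continuous.measurable.comp (hφm.comp (hR l).measurable),
    hfree.mono fun ω hω => h.equivariantExtension_R_apply hX hσ hω, ?_, ?_⟩
  · have hfreeL : ∀ᵐ ω ∂m, ∀ γ : Γ, ∀ l, R l (L γ ω) = L γ ω → l = 1 :=
      ae_all_iff.2 fun γ => (h.L_mp γ).quasiMeasurePreserving.ae hfree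
    have hφσ := ae_all_iff.2 fun γ => ae_forall_translate_of_ae_restrict hR hXm (hφ γ)
    filter_upwards [hfreeL, hφσ] with ω hωL hωφ γ
    exact h.equivariantExtension_L_apply hX hα hσ (hωL γ) (hωφ γ (σ ω) (hσ ω))
  · filter_upwards [ae_restrict_of_ae hfree, ae_restrict_mem hXm] with x hx hxX
    exact h.equivariantExtension_eq_self hX hσ hxX hx

end Extension

end IsMECoupling

theorem induced_no_invariant_vectors_general {Γ Λ Ω V : Type}
    [Group Γ] [Countable Γ] [Group Λ] [Countable Λ]
    [MeasurableSpace Ω] (m : Measure Ω)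
    (L : Γ → Ω → Ω) (R : Λ → Ω → Ω) (h : IsMECoupling m L R)
    (X Y : Set Ω) (hXm : MeasurableSet X) (hYm : MeasurableSet Y)
    (hX : ∀ s : Ω, ∃! x, x ∈ X ∧ ∃ lam : Λ, R lam s = x)
    (hY : ∀ s : Ω, ∃! y, y ∈ Y ∧ ∃ γ : Γ, L γ s = y)
    (α : Γ → Ω → Λ) (hα : ∀ γ : Γ, ∀ x ∈ X, R (α γ x)⁻¹ (L γ x) ∈ X)
    (β : Ω → Λ → Γ)
    [NormedAddCommGroup V] [InnerProductSpace ℂ V]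
    [MeasurableSpace V] [BorelSpace V]
    (π : Λ →* (V ≃ₗᵢ[ℂ] V))
    (hwm : ∀ g : Ω → V, Measurable g →
      Integrable (fun y => ‖g y‖ ^ 2) (m.restrict Y) →
      (∀ lam : Λ, ∀ᵐ y ∂m.restrict Y,
        g (L (β y lam)⁻¹ (R lam y)) = (π (lam⁻¹)) (g y)) →
      g =ᵐ[m.restrict Y] 0) :
    ∀ φ : Ω → V, Measurable φ →
      Integrable (fun x => ‖φ x‖ ^ 2) (m.restrict X) →
      (∀ γ : Γ, ∀ᵐ x ∂m.restrict X,
        (π ((α γ x)⁻¹)) (φ (R (α γ x)⁻¹ (L γ x))) = φ x) →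
      φ =ᵐ[m.restrict X] 0 := by
  intro φ hφm _ hφ
  obtain ⟨Φ, hΦm, hΦR, hΦL, hΦφ⟩ := h.exists_invariant_extension hXm hX hα hφm hφ
  have : IsFiniteMeasure (m.restrict Y) :=
    isFiniteMeasure_restrict.2 (h.measure_ne_top_of_existsUnique hYm hY)
  have hΦY : ∀ᵐ y ∂m.restrict Y, Φ y = 0 := by
    refine (hwm (fun ω => Homeomorph.unitBall (Φ ω)) (measurable_coe_unitBall.comp hΦm)
      (integrable_norm_unitBall_sq hΦm) fun l => ?_).mono fun y hy => coe_unitBall_eq_zero.1 hy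
    filter_upwards [ae_restrict_of_ae hΦR,
      ae_restrict_of_ae ((h.R_mp l).quasiMeasurePreserving.ae hΦL)] with y hyR hyL
    rw [hyL, hyR, coe_unitBall_linearIsometryEquiv_apply]
  have hΦ : ∀ᵐ ω ∂m, Φ ω = 0 := by
    filter_upwards [ae_forall_translate_of_ae_restrict
      (fun γ => (h.L_mp γ).quasiMeasurePreserving) hYm hΦY, hΦL] with ω hωY hωL
    obtain ⟨y, ⟨hyY, γ, rfl⟩, -⟩ := hY ω
    rw [← hωL γ, hωY γ hyY]
  filter_upwards [hΦφ, ae_restrict_of_ae hΦ] with x hxφ hx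
  rw [Pi.zero_apply, ← hxφ, hx]

/-- Lemma 8.2.  Let `(Ω, m)` be an ergodic ME coupling of `Γ` with `Λ`,
`X` a strict fundamental domain for the `Λ`-action with cocycle `α` and induced `Γ`-action
`γ·x = (γx)α(γ,x)⁻¹`, and `Y` a strict fundamental domain for the `Γ`-action with induced
`Λ`-action `y·λ = β(y,λ)⁻¹(yλ)`.  Let `π` be a unitary representation of `Λ` on a complex
Hilbert space `V` such that the only `g ∈ L²(Y, V)` with `g(y·λ) = π(λ⁻¹)(g(y))` is `g = 0`
(which holds when `π` is weakly mixing).  Then the induced `Γ`-representation on `L²(X, V)`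
has no nonzero invariant vectors. -/
theorem induced_no_invariant_vectors {Γ Λ Ω V : Type}
    [Group Γ] [Countable Γ] [Group Λ] [Countable Λ]
    [MeasurableSpace Ω] (m : Measure Ω)
    (L : Γ → Ω → Ω) (R : Λ → Ω → Ω) (h : IsMECoupling m L R)
    (herg : ∀ A : Set Ω, MeasurableSet A → (∀ γ : Γ, L γ ⁻¹' A = A) →
      (∀ lam : Λ, R lam ⁻¹' A = A) → m A = 0 ∨ m Aᶜ = 0)
    (X Y : Set Ω) (hXm : MeasurableSet X) (hYm : MeasurableSet Y)
    (hX : ∀ s : Ω, ∃! x, x ∈ X ∧ ∃ lam : Λ, R lam s = x)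
    (hY : ∀ s : Ω, ∃! y, y ∈ Y ∧ ∃ γ : Γ, L γ s = y)
    (α : Γ → Ω → Λ) (hα : ∀ γ : Γ, ∀ x ∈ X, R (α γ x)⁻¹ (L γ x) ∈ X)
    (β : Ω → Λ → Γ) (hβ : ∀ y ∈ Y, ∀ lam : Λ, L (β y lam)⁻¹ (R lam y) ∈ Y)
    [NormedAddCommGroup V] [InnerProductSpace ℂ V] [CompleteSpace V]
    [MeasurableSpace V] [BorelSpace V]
    (π : Λ →* (V ≃ₗᵢ[ℂ] V))
    (hwm : ∀ g : Ω → V, Measurable g →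
      Integrable (fun y => ‖g y‖ ^ 2) (m.restrict Y) →
      (∀ lam : Λ, ∀ᵐ y ∂m.restrict Y,
        g (L (β y lam)⁻¹ (R lam y)) = (π (lam⁻¹)) (g y)) →
      g =ᵐ[m.restrict Y] 0) :
    ∀ φ : Ω → V, Measurable φ →
      Integrable (fun x => ‖φ x‖ ^ 2) (m.restrict X) →
      (∀ γ : Γ, ∀ᵐ x ∂m.restrict X,
        (π ((α γ x)⁻¹)) (φ (R (α γ x)⁻¹ (L γ x))) = φ x) →
      φ =ᵐ[m.restrict X] 0 :=
  induced_no_invariant_vectors_general m L R h X Y hXm hYm hX hY α hα β π hwm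
end
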